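/- arXiv:2209.10432 — 7 statements merged into one kernel-verified Lean document; each statement's English description precedes it below -/
import Mathlib

section
/- The quadrature scalar products agree with the exact L² scalar product when one argument is a constant vector field: (i) if K ⊂ ℝ² is a nondegenerate triangle, c ∈ ℝ² is constant and v ∈ N0⁺(K), then (|K|/3) Σ_{i=1}^{3} c · v(m_i) = ∫_K c · v(x) dx; (ii) if K is an axis-aligned rectangle, c ∈ ℝ² is constant and v ∈ N0(K), then |K| · (½ Σ_{i=1}^{2} c₁ v₁(m_{h,i}) + ½ Σ_{j=1}^{2} c₂ v₂(m_{v,j})) = ∫_K c · v(x) dx. -/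
open MeasureTheory

/-- Euclidean scalar product on ℝ². -/
noncomputable def dot (u v : ℝ × ℝ) : ℝ := u.1 * v.1 + u.2 * v.2

/-!
In both cases the integrand `c ⬝ v` is a polynomial of degree at most two, and the quadrature
rule is exact on such polynomials. On a triangle, the affine chart from the reference triangle
`{x ≥ 0, y ≥ 0, x + y ≤ 1}` multiplies the integral and the area by the same Jacobian and maps
edge midpoints to edge midpoints. On the reference triangle, Fubini gives the moments
`∫ x = ∫ y = 1/6`, `∫ x² = ∫ y² = 1/12`, `∫ x y = 1/24`, which are exactly what the
edge-midpoint rule with weight `1/6` returns. On a rectangle, `c ⬝ w` is an affine function of `y`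
plus an affine function of `x`, and the trapezoidal rule is exact for affine functions.
-/

open Set

/-- Polynomial functions of degree at most two on `E`. -/
def quadraticFunctions (E : Type*) [AddCommGroup E] [Module ℝ E] : Submodule ℝ (E → ℝ) :=
  Submodule.span ℝ {f | ∃ a b : E →ᵃ[ℝ] ℝ, f = ⇑a * ⇑b}

section QuadraticFunctions

variable {E F : Type*} [AddCommGroup E] [Module ℝ E] [AddCommGroup F] [Module ℝ F]

theorem mul_mem_quadraticFunctions (a b : E →ᵃ[ℝ] ℝ) : ⇑a * ⇑b ∈ quadraticFunctions E :=
  Submodule.subset_span ⟨a, b, rfl⟩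

theorem affineMap_mem_quadraticFunctions (a : E →ᵃ[ℝ] ℝ) : ⇑a ∈ quadraticFunctions E := by
  simpa using mul_mem_quadraticFunctions a (AffineMap.const ℝ E 1)

theorem one_mem_quadraticFunctions : (1 : E → ℝ) ∈ quadraticFunctions E :=
  affineMap_mem_quadraticFunctions (AffineMap.const ℝ E 1)

theorem comp_mem_quadraticFunctions {f : F → ℝ} (hf : f ∈ quadraticFunctions F)
    (T : E →ᵃ[ℝ] F) : f ∘ T ∈ quadraticFunctions E := by
  have : quadraticFunctions F ≤ (quadraticFunctions E).comap (LinearMap.funLeft ℝ ℝ T) := by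
    refine Submodule.span_le.mpr ?_
    rintro _ ⟨a, b, rfl⟩
    exact mul_mem_quadraticFunctions (a.comp T) (b.comp T)
  exact this hf

end QuadraticFunctions

theorem continuous_of_mem_quadraticFunctions {E : Type*} [NormedAddCommGroup E]
    [NormedSpace ℝ E] [FiniteDimensional ℝ E] {f : E → ℝ} (hf : f ∈ quadraticFunctions E) :
    Continuous f := by
  induction hf using Submodule.span_induction with
  | mem _ h =>
    obtain ⟨a, b, rfl⟩ := h
    exact a.continuous_of_finiteDimensional.mul b.continuous_of_finiteDimensional
  | zero => exact continuous_zero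
  | add _ _ _ _ hf hg => exact hf.add hg
  | smul c _ _ hf => exact hf.const_smul c

theorem AffineMap.apply_prod_eq_add (a : ℝ × ℝ →ᵃ[ℝ] ℝ) (z : ℝ × ℝ) :
    a z = a 0 + a.linear (1, 0) * z.1 + a.linear (0, 1) * z.2 := by
  have hz : z = z.1 • ((1 : ℝ), (0 : ℝ)) + z.2 • ((0 : ℝ), (1 : ℝ)) := by ext <;> simp
  conv_lhs => rw [AffineMap.decomp a, hz]
  simp only [Pi.add_apply, map_add, map_smul, smul_eq_mul]
  ring

theorem integral_cubic (c₀ c₁ c₂ c₃ a b : ℝ) :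
    ∫ t in a..b, (c₀ + c₁ * t + c₂ * t ^ 2 + c₃ * t ^ 3) =
      (c₀ * b + c₁ / 2 * b ^ 2 + c₂ / 3 * b ^ 3 + c₃ / 4 * b ^ 4)
        - (c₀ * a + c₁ / 2 * a ^ 2 + c₂ / 3 * a ^ 3 + c₃ / 4 * a ^ 4) := by
  refine intervalIntegral.integral_eq_sub_of_hasDerivAt
    (f := fun t => c₀ * t + c₁ / 2 * t ^ 2 + c₂ / 3 * t ^ 3 + c₃ / 4 * t ^ 4) (fun t _ => ?_)
    (Continuous.intervalIntegrable (by fun_prop) a b)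
  convert ((((hasDerivAt_id t).const_mul c₀).add ((hasDerivAt_pow 2 t).const_mul (c₁ / 2))).add
    ((hasDerivAt_pow 3 t).const_mul (c₂ / 3))).add ((hasDerivAt_pow 4 t).const_mul (c₃ / 4))
    using 1
  · rfl
  · norm_num; ring

theorem integral_affine_eq_trapezoid (α β a b : ℝ) :
    ∫ t in a..b, (α + β * t) = (b - a) * ((α + β * a) + (α + β * b)) / 2 := by
  have h := integral_cubic α β 0 0 a b
  simp only [zero_mul, add_zero, zero_div] at h
  rw [h]; ring

theorem setIntegral_Icc_eq_intervalIntegral {a b : ℝ} (h : a ≤ b) (f : ℝ → ℝ) :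
    ∫ t in Icc a b, f t = ∫ t in a..b, f t := by
  rw [integral_Icc_eq_integral_Ioc, intervalIntegral.integral_of_le h]

theorem setIntegral_Icc_prod_Icc_add {a₁ b₁ a₂ b₂ : ℝ} (h₁ : a₁ ≤ b₁) (h₂ : a₂ ≤ b₂)
    {u v : ℝ → ℝ} (hu : Continuous u) (hv : Continuous v) :
    ∫ z in Icc a₁ b₁ ×ˢ Icc a₂ b₂, (u z.2 + v z.1) =
      (b₁ - a₁) * (∫ y in a₂..b₂, u y) + (b₂ - a₂) * ∫ x in a₁..b₁, v x := by
  have hint : IntegrableOn (fun z : ℝ × ℝ => u z.2 + v z.1) (Icc a₁ b₁ ×ˢ Icc a₂ b₂) :=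
    (by fun_prop : Continuous fun z : ℝ × ℝ => u z.2 + v z.1).continuousOn.integrableOn_compact
      (isCompact_Icc.prod isCompact_Icc)
  have hinner (x : ℝ) :
      ∫ y in a₂..b₂, (u y + v x) = (∫ y in a₂..b₂, u y) + (b₂ - a₂) * v x := by
    rw [intervalIntegral.integral_add (hu.intervalIntegrable _ _) intervalIntegrable_const,
      intervalIntegral.integral_const, smul_eq_mul]
  rw [Measure.volume_eq_prod, setIntegral_prod _ hint]
  simp only [setIntegral_Icc_eq_intervalIntegral h₁, setIntegral_Icc_eq_intervalIntegral h₂,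
    hinner]
  rw [intervalIntegral.integral_add intervalIntegrable_const
      ((hv.const_mul _).intervalIntegrable _ _), intervalIntegral.integral_const,
    intervalIntegral.integral_const_mul, smul_eq_mul]

def refTriangle : Set (ℝ × ℝ) := {z | 0 ≤ z.1 ∧ 0 ≤ z.2 ∧ z.1 + z.2 ≤ 1}

def refVertex : Fin 3 → ℝ × ℝ := ![(0, 0), (1, 0), (0, 1)]

theorem convexHull_range_refVertex : convexHull ℝ (range refVertex) = refTriangle := by
  let Φ : (Fin 3 → ℝ) →ₗ[ℝ] ℝ × ℝ := (LinearMap.proj 1).prod (LinearMap.proj 2)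
  have hΦ : refVertex = Φ ∘ fun i j => if i = j then 1 else 0 := by
    ext i <;> fin_cases i <;> simp [refVertex, Φ]
  rw [hΦ, range_comp, ← LinearMap.image_convexHull, convexHull_basis_eq_stdSimplex]
  ext ⟨x, y⟩
  simp only [mem_image, stdSimplex, mem_ofPred_eq, Fin.sum_univ_three, refTriangle, Φ,
    LinearMap.prod_apply, LinearMap.coe_proj]
  constructor
  · rintro ⟨w, ⟨hw, hsum⟩, hwxy⟩
    simp only [Function.prod, Function.eval, Prod.mk.injEq] at hwxy
    obtain ⟨rfl, rfl⟩ := hwxy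
    exact ⟨hw 1, hw 2, by linarith [hw 0]⟩
  · rintro ⟨hx, hy, hxy⟩
    refine ⟨![1 - x - y, x, y], ⟨fun i => ?_, ?_⟩, rfl⟩
    · fin_cases i <;>
        simp only [Fin.zero_eta, Fin.mk_one, Fin.reduceFinMk, Fin.isValue, Matrix.cons_val_zero,
          Matrix.cons_val_one, Matrix.cons_val] <;>
        linarith
    · simp only [Fin.isValue, Matrix.cons_val_zero, Matrix.cons_val_one, Matrix.cons_val]
      ring

theorem isCompact_refTriangle : IsCompact refTriangle :=
  convexHull_range_refVertex ▸ (finite_range refVertex).isCompact_convexHull (𝕜 := ℝ)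

theorem setIntegral_refTriangle_eq_intervalIntegral {f : ℝ × ℝ → ℝ} (hf : Continuous f) :
    ∫ z in refTriangle, f z = ∫ x in (0 : ℝ)..1, ∫ y in (0 : ℝ)..(1 - x), f (x, y) := by
  have hS := isCompact_refTriangle.isClosed.measurableSet
  have hslice (x : ℝ) :
      Prod.mk x ⁻¹' refTriangle = if x ∈ Icc 0 1 then Icc 0 (1 - x) else ∅ := by
    ext y
    split_ifs with hx
    · simp only [refTriangle, mem_preimage, mem_ofPred_eq, mem_Icc]
      constructor
      · rintro ⟨-, hy, hxy⟩; exact ⟨hy, by linarith⟩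
      · rintro ⟨hy, hxy⟩; exact ⟨hx.1, hy, by linarith⟩
    · simp only [refTriangle, mem_preimage, mem_ofPred_eq, mem_empty_iff_false, iff_false]
      simp only [mem_Icc, not_and_or, not_le] at hx
      rintro ⟨_, _, _⟩; rcases hx with h | h <;> linarith
  have hslice_integral (x : ℝ) : ∫ y, refTriangle.indicator f (x, y) =
      (Icc 0 1).indicator (fun x => ∫ y in (0 : ℝ)..(1 - x), f (x, y)) x := by
    simp_rw [← indicator_comp_right (Prod.mk x)]
    rw [integral_indicator (measurable_prodMk_left hS), hslice]
    split_ifs with hx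
    · rw [indicator_of_mem hx, setIntegral_Icc_eq_intervalIntegral (by linarith [hx.2]),
        Function.comp_def]
    · rw [indicator_of_notMem hx, Measure.restrict_empty, integral_zero_measure]
  have hint : Integrable (refTriangle.indicator f) :=
    (integrable_indicator_iff hS).mpr (hf.continuousOn.integrableOn_compact isCompact_refTriangle)
  rw [← integral_indicator hS, Measure.volume_eq_prod, integral_prod _ hint]
  simp_rw [hslice_integral]
  rw [integral_indicator measurableSet_Icc, setIntegral_Icc_eq_intervalIntegral zero_le_one]

theorem setIntegral_refTriangle_quadratic (c₀ c₁ c₂ c₃ c₄ c₅ : ℝ) :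
    ∫ z in refTriangle,
        (c₀ + c₁ * z.1 + c₂ * z.2 + c₃ * z.1 ^ 2 + c₄ * (z.1 * z.2) + c₅ * z.2 ^ 2) =
      c₀ / 2 + c₁ / 6 + c₂ / 6 + c₃ / 12 + c₄ / 24 + c₅ / 12 := by
  have hinner (x : ℝ) :
      ∫ y in (0 : ℝ)..(1 - x), (c₀ + c₁ * x + c₂ * y + c₃ * x ^ 2 + c₄ * (x * y) + c₅ * y ^ 2) =
        (c₀ + c₂ / 2 + c₅ / 3) + (c₁ - c₀ + c₄ / 2 - c₂ - c₅) * x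
          + (c₃ - c₁ + c₂ / 2 - c₄ + c₅) * x ^ 2 + (-c₃ + c₄ / 2 - c₅ / 3) * x ^ 3 := by
    rw [show (fun y => c₀ + c₁ * x + c₂ * y + c₃ * x ^ 2 + c₄ * (x * y) + c₅ * y ^ 2) =
        fun y => (c₀ + c₁ * x + c₃ * x ^ 2) + (c₂ + c₄ * x) * y + c₅ * y ^ 2 + 0 * y ^ 3 by
      ext y; ring, integral_cubic]
    ring
  rw [setIntegral_refTriangle_eq_intervalIntegral (by fun_prop)]
  simp_rw [hinner, integral_cubic]
  ring

theorem sum_refVertex_midpoint (g : ℝ × ℝ → ℝ) :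
    ∑ i, g (midpoint ℝ (refVertex (i + 1)) (refVertex (i + 2))) =
      g (1 / 2, 1 / 2) + g (0, 1 / 2) + g (1 / 2, 0) := by
  simp [Fin.sum_univ_three, refVertex, midpoint_eq_smul_add]

theorem setIntegral_refTriangle_eq_edgeMidpointRule {g : ℝ × ℝ → ℝ}
    (hg : g ∈ quadraticFunctions (ℝ × ℝ)) :
    ∫ z in refTriangle, g z =
      1 / 6 * ∑ i, g (midpoint ℝ (refVertex (i + 1)) (refVertex (i + 2))) := by
  induction hg using Submodule.span_induction with
  | mem _ h =>
    obtain ⟨a, b, rfl⟩ := h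
    have ha := a.apply_prod_eq_add
    have hb := b.apply_prod_eq_add
    generalize a 0 = A₀, a.linear (1, 0) = A₁, a.linear (0, 1) = A₂ at ha
    generalize b 0 = B₀, b.linear (1, 0) = B₁, b.linear (0, 1) = B₂ at hb
    rw [sum_refVertex_midpoint]
    simp only [Pi.mul_apply, ha, hb]
    rw [setIntegral_congr_fun isCompact_refTriangle.isClosed.measurableSet (fun z _ => by ring :
      EqOn (fun z : ℝ × ℝ => (A₀ + A₁ * z.1 + A₂ * z.2) * (B₀ + B₁ * z.1 + B₂ * z.2))
        (fun z => A₀ * B₀ + (A₀ * B₁ + A₁ * B₀) * z.1 + (A₀ * B₂ + A₂ * B₀) * z.2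
          + A₁ * B₁ * z.1 ^ 2 + (A₁ * B₂ + A₂ * B₁) * (z.1 * z.2) + A₂ * B₂ * z.2 ^ 2)
        refTriangle),
      setIntegral_refTriangle_quadratic]
    ring
  | zero => simp
  | add f g hf hg ihf ihg =>
    have hint {h : ℝ × ℝ → ℝ} (hh : h ∈ quadraticFunctions (ℝ × ℝ)) :
        IntegrableOn h refTriangle :=
      (continuous_of_mem_quadraticFunctions hh).continuousOn.integrableOn_compact
        isCompact_refTriangle
    simp only [Pi.add_apply, integral_add (hint hf) (hint hg), ihf, ihg, Finset.sum_add_distrib]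
    ring
  | smul c f _ ihf =>
    simp only [Pi.smul_apply, smul_eq_mul, integral_const_mul, ihf, ← Finset.mul_sum]
    ring

def triangleChartLinear (p : Fin 3 → ℝ × ℝ) : (ℝ × ℝ) →L[ℝ] ℝ × ℝ :=
  (ContinuousLinearMap.fst ℝ ℝ ℝ).smulRight (p 1 - p 0) +
    (ContinuousLinearMap.snd ℝ ℝ ℝ).smulRight (p 2 - p 0)

def triangleChart (p : Fin 3 → ℝ × ℝ) : (ℝ × ℝ) →ᵃ[ℝ] ℝ × ℝ :=
  (triangleChartLinear p : (ℝ × ℝ) →ₗ[ℝ] ℝ × ℝ).toAffineMap + AffineMap.const ℝ (ℝ × ℝ) (p 0)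

section TriangleChart

variable (p : Fin 3 → ℝ × ℝ)

theorem triangleChart_apply (z : ℝ × ℝ) :
    triangleChart p z = z.1 • (p 1 - p 0) + z.2 • (p 2 - p 0) + p 0 := rfl

theorem hasFDerivAt_triangleChart (z : ℝ × ℝ) :
    HasFDerivAt (triangleChart p) (triangleChartLinear p) z :=
  (triangleChartLinear p).hasFDerivAt.add_const (p 0)

theorem triangleChart_refVertex (i : Fin 3) : triangleChart p (refVertex i) = p i := by
  fin_cases i <;> simp [triangleChart_apply, refVertex]

theorem triangleChart_image_refTriangle :
    triangleChart p '' refTriangle = convexHull ℝ (range p) := by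
  rw [← convexHull_range_refVertex, AffineMap.image_convexHull, ← range_comp]
  congr 2
  exact funext (triangleChart_refVertex p)

theorem triangleChart_injective (hp : AffineIndependent ℝ p) :
    Function.Injective (triangleChart p) := by
  intro z z' h
  rw [triangleChart_apply, triangleChart_apply] at h
  have hw := hp.eq_zero_of_sum_eq_zero (s := Finset.univ)
    (w := ![-(z.1 - z'.1) - (z.2 - z'.2), z.1 - z'.1, z.2 - z'.2])
    (by simp only [Fin.sum_univ_three, Fin.isValue, Matrix.cons_val_zero, Matrix.cons_val_one,
      Matrix.cons_val]; ring)
    (by simp only [Fin.sum_univ_three, Fin.isValue, Matrix.cons_val_zero, Matrix.cons_val_one,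
      Matrix.cons_val]; linear_combination (norm := module) h)
  have h₁ := hw 1 (Finset.mem_univ _)
  have h₂ := hw 2 (Finset.mem_univ _)
  simp only [Matrix.cons_val_one, Matrix.cons_val_two, Matrix.cons_val_zero, Matrix.head_cons,
    Matrix.tail_cons, sub_eq_zero] at h₁ h₂
  exact Prod.ext h₁ h₂

theorem setIntegral_convexHull_eq_abs_det_mul (hp : AffineIndependent ℝ p) (f : ℝ × ℝ → ℝ) :
    ∫ x in convexHull ℝ (range p), f x =
      |(triangleChartLinear p).det| * ∫ z in refTriangle, f (triangleChart p z) := by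
  rw [← triangleChart_image_refTriangle, integral_image_eq_integral_abs_det_fderiv_smul volume
    isCompact_refTriangle.isClosed.measurableSet
    (fun z _ => (hasFDerivAt_triangleChart p z).hasFDerivWithinAt)
    (triangleChart_injective p hp).injOn]
  simp only [smul_eq_mul, integral_const_mul]

theorem setIntegral_convexHull_eq_edgeMidpointRule (hp : AffineIndependent ℝ p)
    {f : ℝ × ℝ → ℝ} (hf : f ∈ quadraticFunctions (ℝ × ℝ)) :
    ∫ x in convexHull ℝ (range p), f x =
      (volume (convexHull ℝ (range p))).toReal / 3 *
        ∑ i, f (midpoint ℝ (p (i + 1)) (p (i + 2))) := by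
  have hvol : (volume (convexHull ℝ (range p))).toReal = |(triangleChartLinear p).det| / 2 := by
    have h := setIntegral_convexHull_eq_abs_det_mul p hp fun _ => 1
    have h₁ := setIntegral_refTriangle_eq_edgeMidpointRule
      (one_mem_quadraticFunctions (E := ℝ × ℝ))
    simp only [setIntegral_const, smul_eq_mul, mul_one, Pi.one_apply, Finset.sum_const,
      Finset.card_univ, Fintype.card_fin] at h h₁
    rw [← Measure.real, h, h₁]
    norm_num
    ring
  have hmid (i : Fin 3) : midpoint ℝ (p (i + 1)) (p (i + 2)) =
      triangleChart p (midpoint ℝ (refVertex (i + 1)) (refVertex (i + 2))) := by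
    rw [AffineMap.map_midpoint, triangleChart_refVertex, triangleChart_refVertex]
  have hf₁ := setIntegral_refTriangle_eq_edgeMidpointRule
    (comp_mem_quadraticFunctions hf (triangleChart p))
  simp only [Function.comp_apply, ← hmid] at hf₁
  rw [setIntegral_convexHull_eq_abs_det_mul p hp, hf₁, hvol]
  ring

end TriangleChart

def dotAffine (u : ℝ × ℝ) (c : ℝ) : (ℝ × ℝ) →ᵃ[ℝ] ℝ :=
  (u.1 • LinearMap.fst ℝ ℝ ℝ + u.2 • LinearMap.snd ℝ ℝ ℝ).toAffineMap + AffineMap.const ℝ _ c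

theorem dotAffine_apply (u : ℝ × ℝ) (c : ℝ) (x : ℝ × ℝ) : dotAffine u c x = dot u x + c := rfl

theorem dot_nedelec_mem_quadraticFunctions (c : ℝ × ℝ) (lam : Fin 3 → (ℝ × ℝ) →ᵃ[ℝ] ℝ)
    (g : Fin 3 → ℝ × ℝ) (av bv : Fin 3 → ℝ) :
    (fun x => dot c (∑ i, (av i • (lam i x • g (i + 1) - lam (i + 1) x • g i)
      + bv i • (lam i x * lam (i + 1) x) • g (i + 2)))) ∈ quadraticFunctions (ℝ × ℝ) := by
  have hexpand : (fun x => dot c (∑ i, (av i • (lam i x • g (i + 1) - lam (i + 1) x • g i)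
      + bv i • (lam i x * lam (i + 1) x) • g (i + 2)))) =
      ∑ i, (av i • (dot c (g (i + 1)) • ⇑(lam i) - dot c (g i) • ⇑(lam (i + 1)))
        + (bv i * dot c (g (i + 2))) • (⇑(lam i) * ⇑(lam (i + 1)))) := by
    ext x
    simp only [Fin.sum_univ_three, Finset.sum_apply, dot, Fin.isValue, Fin.reduceAdd,
      Prod.fst_add, Prod.snd_add, Prod.smul_fst, Prod.smul_snd, Prod.fst_sub, Prod.snd_sub,
      smul_eq_mul, Pi.add_apply, Pi.smul_apply, Pi.sub_apply, Pi.mul_apply]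
    ring
  rw [hexpand]
  refine Submodule.sum_mem _ fun i _ => add_mem (Submodule.smul_mem _ _ (sub_mem ?_ ?_)) ?_
  · exact Submodule.smul_mem _ _ (affineMap_mem_quadraticFunctions _)
  · exact Submodule.smul_mem _ _ (affineMap_mem_quadraticFunctions _)
  · exact Submodule.smul_mem _ _ (mul_mem_quadraticFunctions _ _)

theorem stmt_2_general
    -- triangle data
    (p : Fin 3 → ℝ × ℝ) (hp : AffineIndependent ℝ p)
    (K : Set (ℝ × ℝ)) (hK : K = convexHull ℝ (Set.range p))
    (m : Fin 3 → ℝ × ℝ) (hm : ∀ i : Fin 3, m i = midpoint ℝ (p (i + 1)) (p (i + 2)))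
    (lam : Fin 3 → ℝ × ℝ → ℝ) (g : Fin 3 → ℝ × ℝ) (cc : Fin 3 → ℝ)
    (hlam : ∀ i x, lam i x = dot (g i) x + cc i)
    (Phi0 PhiB : Fin 3 → ℝ × ℝ → ℝ × ℝ)
    (hPhi0 : ∀ i x, Phi0 i x = lam i x • g (i + 1) - lam (i + 1) x • g i)
    (hPhiB : ∀ i x, PhiB i x = (lam i x * lam (i + 1) x) • g (i + 2))
    (v : ℝ × ℝ → ℝ × ℝ) (av bv : Fin 3 → ℝ)
    (hv : ∀ x, v x = ∑ i : Fin 3, (av i • Phi0 i x + bv i • PhiB i x))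
    (cvec : ℝ × ℝ)
    -- rectangle data
    (a₁ b₁ a₂ b₂ : ℝ) (h1 : a₁ < b₁) (h2 : a₂ < b₂)
    (R : Set (ℝ × ℝ)) (hR : R = Set.Icc a₁ b₁ ×ˢ Set.Icc a₂ b₂)
    (AR : ℝ) (hAR : AR = (b₁ - a₁) * (b₂ - a₂))
    (w : ℝ × ℝ → ℝ × ℝ) (α β γ δ : ℝ)
    (hw : ∀ x : ℝ × ℝ, w x = (α + β * x.2, γ + δ * x.1))
    (dvec : ℝ × ℝ) :
    ((volume K).toReal / 3) * (∑ i : Fin 3, dot cvec (v (m i))) = ∫ x in K, dot cvec (v x)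
    ∧
    AR * ((1 / 2) * (dvec.1 * (w ((a₁ + b₁) / 2, a₂)).1 + dvec.1 * (w ((a₁ + b₁) / 2, b₂)).1)
        + (1 / 2) * (dvec.2 * (w (a₁, (a₂ + b₂) / 2)).2 + dvec.2 * (w (b₁, (a₂ + b₂) / 2)).2))
      = ∫ x in R, dot dvec (w x) := by
  refine ⟨?_, ?_⟩
  · set A : Fin 3 → (ℝ × ℝ) →ᵃ[ℝ] ℝ := fun i => dotAffine (g i) (cc i)
    have hv' : v = fun x => ∑ i, (av i • (A i x • g (i + 1) - A (i + 1) x • g i)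
        + bv i • (A i x * A (i + 1) x) • g (i + 2)) := by
      ext1 x
      simp only [hv, hPhi0, hPhiB, hlam, A, dotAffine_apply]
    simp only [hK, hm, hv']
    exact (setIntegral_convexHull_eq_edgeMidpointRule p hp
      (dot_nedelec_mem_quadraticFunctions cvec A g av bv)).symm
  · simp only [hR, hAR, hw, dot]
    rw [setIntegral_Icc_prod_Icc_add h1.le h2.le (u := fun y => dvec.1 * (α + β * y))
      (v := fun x => dvec.2 * (γ + δ * x)) (by fun_prop) (by fun_prop),
      intervalIntegral.integral_const_mul, intervalIntegral.integral_const_mul,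
      integral_affine_eq_trapezoid, integral_affine_eq_trapezoid]
    ring

/-- The quadrature scalar products agree with the exact L² scalar
product when one argument is a constant vector field:
(i) on a nondegenerate triangle `K` for `v ∈ N0⁺(K)` (enriched Nédélec space spanned
by `Φ⁰_ij = λ_i ∇λ_j − λ_j ∇λ_i` and the bubbles `Φ^B_ij = λ_i λ_j ∇λ_k`),
`(|K|/3) Σᵢ c ⬝ v(mᵢ) = ∫_K c ⬝ v`;
(ii) on an axis-aligned rectangle `R` for `w ∈ N0(R) = {(α+βy, γ+δx)}`,
`|R| (½ Σᵢ c₁ w₁(m_{h,i}) + ½ Σⱼ c₂ w₂(m_{v,j})) = ∫_R c ⬝ w`. -/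
theorem stmt_2
    -- triangle data
    (p : Fin 3 → ℝ × ℝ) (hp : AffineIndependent ℝ p)
    (K : Set (ℝ × ℝ)) (hK : K = convexHull ℝ (Set.range p))
    (m : Fin 3 → ℝ × ℝ) (hm : ∀ i : Fin 3, m i = midpoint ℝ (p (i + 1)) (p (i + 2)))
    (lam : Fin 3 → ℝ × ℝ → ℝ) (g : Fin 3 → ℝ × ℝ) (cc : Fin 3 → ℝ)
    (hlam : ∀ i x, lam i x = dot (g i) x + cc i)
    (hdelta : ∀ i j, lam i (p j) = if i = j then 1 else 0)
    (Phi0 PhiB : Fin 3 → ℝ × ℝ → ℝ × ℝ)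
    (hPhi0 : ∀ i x, Phi0 i x = lam i x • g (i + 1) - lam (i + 1) x • g i)
    (hPhiB : ∀ i x, PhiB i x = (lam i x * lam (i + 1) x) • g (i + 2))
    (v : ℝ × ℝ → ℝ × ℝ) (av bv : Fin 3 → ℝ)
    (hv : ∀ x, v x = ∑ i : Fin 3, (av i • Phi0 i x + bv i • PhiB i x))
    (cvec : ℝ × ℝ)
    -- rectangle data
    (a₁ b₁ a₂ b₂ : ℝ) (h1 : a₁ < b₁) (h2 : a₂ < b₂)
    (R : Set (ℝ × ℝ)) (hR : R = Set.Icc a₁ b₁ ×ˢ Set.Icc a₂ b₂)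
    (AR : ℝ) (hAR : AR = (b₁ - a₁) * (b₂ - a₂))
    (w : ℝ × ℝ → ℝ × ℝ) (α β γ δ : ℝ)
    (hw : ∀ x : ℝ × ℝ, w x = (α + β * x.2, γ + δ * x.1))
    (dvec : ℝ × ℝ) :
    ((volume K).toReal / 3) * (∑ i : Fin 3, dot cvec (v (m i))) = ∫ x in K, dot cvec (v x)
    ∧
    AR * ((1 / 2) * (dvec.1 * (w ((a₁ + b₁) / 2, a₂)).1 + dvec.1 * (w ((a₁ + b₁) / 2, b₂)).1)
        + (1 / 2) * (dvec.2 * (w (a₁, (a₂ + b₂) / 2)).2 + dvec.2 * (w (b₁, (a₂ + b₂) / 2)).2))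
      = ∫ x in R, dot dvec (w x) :=
  stmt_2_general p hp K hK m hm lam g cc hlam Phi0 PhiB hPhi0 hPhiB v av bv hv cvec a₁ b₁ a₂ b₂ h1
    h2 R hR AR hAR w α β γ δ hw dvec
end

section
/- Let K ⊂ ℝ² be a nondegenerate triangle. If v ∈ N0⁺(K) satisfies v(m₁) = v(m₂) = v(m₃) = 0 at the three edge midpoints, then v = 0. Consequently, the quadrature form (u,v)_{h,K} = (|K|/3) Σ_{i=1}^{3} u(m_i) · v(m_i) is a (positive definite) inner product on the six-dimensional space N0⁺(K). -/
open MeasureTheory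

/-!
At the midpoint `mₖ` of the edge opposite `pₖ` one has `λₖ = 0` and `λᵢ = 1/2` for `i ≠ k`,
so every bubble except `Φᴮ_{k+1,k+2}` vanishes there and `v(mₖ)` is an explicit combination
`α (∇λ_{k+2} - ∇λ_{k+1}) + β ∇λₖ` with `α = a_{k+1}/2` and `β = (a_{k+2} - aₖ)/2 + b_{k+1}/4`.
The gradients are dual to the edge vectors `pⱼ - p₀`, and pairing with these shows that
`∇λ_{k+2} - ∇λ_{k+1}` and `∇λₖ` are linearly independent. Hence `v(mₖ) = 0` for all `k`
forces every `a_{k+1}` and then every `b_{k+1}` to vanish. Positivity of the quadrature form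
follows, since a nondegenerate triangle has positive finite area.
-/

lemma dot_add_left (x y t : ℝ × ℝ) : dot (x + y) t = dot x t + dot y t := by
  simp only [dot, Prod.fst_add, Prod.snd_add]; ring

lemma dot_sub_left (x y t : ℝ × ℝ) : dot (x - y) t = dot x t - dot y t := by
  simp only [dot, Prod.fst_sub, Prod.snd_sub]; ring

lemma dot_smul_left (r : ℝ) (x t : ℝ × ℝ) : dot (r • x) t = r * dot x t := by
  simp only [dot, Prod.smul_fst, Prod.smul_snd, smul_eq_mul]; ring

lemma dot_zero_left (t : ℝ × ℝ) : dot 0 t = 0 := by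
  simp [dot]

lemma dot_sub_right (t x y : ℝ × ℝ) : dot t (x - y) = dot t x - dot t y := by
  simp only [dot, Prod.fst_sub, Prod.snd_sub]; ring

lemma dot_midpoint_right (u a b : ℝ × ℝ) :
    dot u (midpoint ℝ a b) = (dot u a + dot u b) / 2 := by
  simp only [dot, midpoint_eq_smul_add, Prod.smul_fst, Prod.smul_snd, Prod.fst_add,
    Prod.snd_add, smul_eq_mul, invOf_eq_inv]
  ring

lemma dot_self_pos {u : ℝ × ℝ} (hu : u ≠ 0) : 0 < dot u u := by
  obtain ⟨u₁, u₂⟩ := u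
  have : u₁ ≠ 0 ∨ u₂ ≠ 0 := by
    by_contra! h
    exact hu (by simp [h.1, h.2])
  simp only [dot]
  rcases this with h | h
  · linarith [mul_self_pos.mpr h, mul_self_nonneg u₂]
  · linarith [mul_self_pos.mpr h, mul_self_nonneg u₁]

lemma sum_dot_self_pos {ι : Type*} [Fintype ι] {u : ι → ℝ × ℝ} (hu : ∃ i, u i ≠ 0) :
    0 < ∑ i, dot (u i) (u i) := by
  obtain ⟨i, hi⟩ := hu
  refine Finset.sum_pos' (fun j _ => ?_) ⟨i, Finset.mem_univ i, dot_self_pos hi⟩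
  by_cases hj : u j = 0
  · simp [hj, dot_zero_left]
  · exact (dot_self_pos hj).le

lemma measure_convexHull_pos_of_affineIndependent {E ι : Type*} [NormedAddCommGroup E]
    [NormedSpace ℝ E] [FiniteDimensional ℝ E] [MeasurableSpace E] [BorelSpace E]
    (μ : Measure E) [μ.IsAddHaarMeasure] [Fintype ι] {p : ι → E}
    (hp : AffineIndependent ℝ p)
    (hcard : Fintype.card ι = Module.finrank ℝ E + 1) :
    0 < (μ (convexHull ℝ (Set.range p))).toReal := by
  have hspan : affineSpan ℝ (Set.range p) = ⊤ :=
    hp.affineSpan_eq_top_iff_card_eq_finrank_add_one.mpr hcard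
  have hint : (interior (convexHull ℝ (Set.range p))).Nonempty :=
    interior_convexHull_nonempty_iff_affineSpan_eq_top.mpr hspan
  have hfin : μ (convexHull ℝ (Set.range p)) ≠ ⊤ :=
    ((Set.finite_range p).isCompact_convexHull (𝕜 := ℝ)).measure_lt_top.ne
  refine ENNReal.toReal_pos (ne_of_gt ?_) hfin
  exact (isOpen_interior.measure_pos μ hint).trans_le (measure_mono interior_subset)

section Barycentric

variable {p : Fin 3 → ℝ × ℝ} {lam : Fin 3 → ℝ × ℝ → ℝ} {g : Fin 3 → ℝ × ℝ}
  {cc : Fin 3 → ℝ}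
  (hlam : ∀ i x, lam i x = dot (g i) x + cc i)
  (hdelta : ∀ i j, lam i (p j) = if i = j then 1 else 0)
include hlam hdelta

lemma dot_grad_vertex (i j : Fin 3) : dot (g i) (p j) = (if i = j then 1 else 0) - cc i := by
  rw [← hdelta, hlam]; ring

lemma dot_grad_edge (i j : Fin 3) :
    dot (g i) (p j - p 0) = (if i = j then 1 else 0) - (if i = 0 then 1 else 0) := by
  rw [dot_sub_right, dot_grad_vertex hlam hdelta, dot_grad_vertex hlam hdelta]; ring

lemma lam_midpoint (i k : Fin 3) :
    lam i (midpoint ℝ (p (k + 1)) (p (k + 2))) = if i = k then 0 else 1 / 2 := by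
  rw [hlam, dot_midpoint_right, dot_grad_vertex hlam hdelta, dot_grad_vertex hlam hdelta]
  fin_cases i <;> fin_cases k <;> norm_num +decide <;> ring

lemma eq_zero_of_smul_grad_add_smul_grad_eq_zero {k : Fin 3} {α β : ℝ}
    (h : α • (g (k + 2) - g (k + 1)) + β • g k = 0) : α = 0 ∧ β = 0 := by
  have pair (j : Fin 3) : α * (dot (g (k + 2)) (p j - p 0) - dot (g (k + 1)) (p j - p 0))
      + β * dot (g k) (p j - p 0) = 0 := by
    rw [← dot_smul_left, ← dot_sub_left, ← dot_smul_left, ← dot_add_left, h, dot_zero_left]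
  have h₁ := pair 1
  have h₂ := pair 2
  simp only [dot_grad_edge hlam hdelta] at h₁ h₂
  fin_cases k <;> norm_num +decide at h₁ h₂ <;> constructor <;> linarith

section LowestOrderNedelec

variable {Phi0 PhiB : Fin 3 → ℝ × ℝ → ℝ × ℝ} {v : ℝ × ℝ → ℝ × ℝ} {av bv : Fin 3 → ℝ}
  (hPhi0 : ∀ i x, Phi0 i x = lam i x • g (i + 1) - lam (i + 1) x • g i)
  (hPhiB : ∀ i x, PhiB i x = (lam i x * lam (i + 1) x) • g (i + 2))
  (hv : ∀ x, v x = ∑ i : Fin 3, (av i • Phi0 i x + bv i • PhiB i x))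
include hPhi0 hPhiB hv

lemma apply_midpoint_eq (k : Fin 3) :
    v (midpoint ℝ (p (k + 1)) (p (k + 2))) =
      (av (k + 1) / 2) • (g (k + 2) - g (k + 1))
        + ((av (k + 2) - av k) / 2 + bv (k + 1) / 4) • g k := by
  simp only [hv, Fin.sum_univ_three, hPhi0, hPhiB, lam_midpoint hlam hdelta]
  fin_cases k <;>
    simp only [Fin.isValue, Fin.zero_eta, Fin.mk_one, Fin.reduceFinMk, Fin.reduceAdd,
      Fin.reduceEq, ↓reduceIte, zero_ne_one, one_ne_zero, mul_zero, zero_mul, zero_smul,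
      smul_zero, add_zero, zero_add, sub_zero, zero_sub, smul_neg] <;>
    module

lemma coeffs_eq_zero_of_apply_midpoint_eq_zero
    (h : ∀ k, v (midpoint ℝ (p (k + 1)) (p (k + 2))) = 0) (i : Fin 3) :
    av i = 0 ∧ bv i = 0 := by
  have hcoeffs (k : Fin 3) := eq_zero_of_smul_grad_add_smul_grad_eq_zero hlam hdelta
    ((apply_midpoint_eq hlam hdelta hPhi0 hPhiB hv k).symm.trans (h k))
  have ha (j : Fin 3) : av j = 0 := by
    simpa using (hcoeffs (j - 1)).1
  obtain ⟨-, hb⟩ := hcoeffs (i - 1)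
  rw [ha, ha, sub_add_cancel] at hb
  exact ⟨ha i, by linarith⟩

end LowestOrderNedelec

end Barycentric

/-- On a nondegenerate triangle `K`, if `v ∈ N0⁺(K)` vanishes at the
three edge midpoints then `v = 0`; consequently the quadrature form
`(u,v)_{h,K} = (|K|/3) Σᵢ u(mᵢ) ⬝ v(mᵢ)` is positive definite on `N0⁺(K)`. -/
theorem stmt_3
    (p : Fin 3 → ℝ × ℝ) (hp : AffineIndependent ℝ p)
    (K : Set (ℝ × ℝ)) (hK : K = convexHull ℝ (Set.range p))
    (m : Fin 3 → ℝ × ℝ) (hm : ∀ i : Fin 3, m i = midpoint ℝ (p (i + 1)) (p (i + 2)))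
    (lam : Fin 3 → ℝ × ℝ → ℝ) (g : Fin 3 → ℝ × ℝ) (cc : Fin 3 → ℝ)
    (hlam : ∀ i x, lam i x = dot (g i) x + cc i)
    (hdelta : ∀ i j, lam i (p j) = if i = j then 1 else 0)
    (Phi0 PhiB : Fin 3 → ℝ × ℝ → ℝ × ℝ)
    (hPhi0 : ∀ i x, Phi0 i x = lam i x • g (i + 1) - lam (i + 1) x • g i)
    (hPhiB : ∀ i x, PhiB i x = (lam i x * lam (i + 1) x) • g (i + 2))
    (v : ℝ × ℝ → ℝ × ℝ) (av bv : Fin 3 → ℝ)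
    (hv : ∀ x, v x = ∑ i : Fin 3, (av i • Phi0 i x + bv i • PhiB i x)) :
    ((∀ i : Fin 3, v (m i) = 0) → ∀ x, v x = 0)
    ∧
    ((∃ x, v x ≠ 0) →
      0 < ((volume K).toReal / 3) * ∑ i : Fin 3, dot (v (m i)) (v (m i))) := by
  have unisolvent : (∀ i : Fin 3, v (m i) = 0) → ∀ x, v x = 0 := by
    intro h x
    have hcoeffs := coeffs_eq_zero_of_apply_midpoint_eq_zero hlam hdelta hPhi0 hPhiB hv
      (fun k => hm k ▸ h k)
    simp [hv, (hcoeffs _).1, (hcoeffs _).2]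
  refine ⟨unisolvent, fun ⟨x, hx⟩ => mul_pos ?_ (sum_dot_self_pos ?_)⟩
  · rw [hK]
    exact div_pos (measure_convexHull_pos_of_affineIndependent volume hp (by simp)) three_pos
  · by_contra! h
    exact hx (unisolvent h x)
end

section
/- Let K = [a₁,b₁] × [a₂,b₂] ⊂ ℝ² be an axis-aligned rectangle and let v = (v₁, v₂) ∈ N0(K). If v₁(m_{h,1}) = v₁(m_{h,2}) = 0 and v₂(m_{v,1}) = v₂(m_{v,2}) = 0, then v = 0. Consequently, the quadrature form (u,v)_{h,K} = |K| (½ Σ_{i=1}^{2} u₁(m_{h,i}) v₁(m_{h,i}) + ½ Σ_{j=1}^{2} u₂(m_{v,j}) v₂(m_{v,j})) is a positive definite inner product on N0(K). -/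
theorem affine_coeffs_eq_zero_of_eq_zero_of_eq_zero {R : Type*} [CommRing R] [IsDomain R]
    {α β s t : R} (hst : s ≠ t) (hs : α + β * s = 0) (ht : α + β * t = 0) :
    α = 0 ∧ β = 0 := by
  have hβ : β * (t - s) = 0 := by linear_combination ht - hs
  have hβ : β = 0 := (mul_eq_zero.mp hβ).resolve_right (sub_ne_zero.mpr hst.symm)
  exact ⟨by simpa [hβ] using hs, hβ⟩

theorem eq_zero_of_half_sq_add_sq_add_half_sq_add_sq_eq_zero {R : Type*} [Field R] [LinearOrder R]
    [IsStrictOrderedRing R] {p q r s : R}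
    (h : 1 / 2 * (p ^ 2 + q ^ 2) + 1 / 2 * (r ^ 2 + s ^ 2) = 0) :
    p = 0 ∧ q = 0 ∧ r = 0 ∧ s = 0 := by
  have h : p ^ 2 + q ^ 2 + (r ^ 2 + s ^ 2) = 0 := by linear_combination 2 * h
  rw [add_eq_zero_iff_of_nonneg (by positivity) (by positivity),
    add_eq_zero_iff_of_nonneg (by positivity) (by positivity),
    add_eq_zero_iff_of_nonneg (by positivity) (by positivity)] at h
  simp only [pow_eq_zero_iff two_ne_zero] at h
  exact ⟨h.1.1, h.1.2, h.2.1, h.2.2⟩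

theorem stmt_5_general
    (a₁ b₁ a₂ b₂ : ℝ) (h1 : a₁ < b₁) (h2 : a₂ < b₂)
    (A : ℝ) (hA : A = (b₁ - a₁) * (b₂ - a₂))
    (v : ℝ × ℝ → ℝ × ℝ) (α β γ δ : ℝ)
    (hv : ∀ x : ℝ × ℝ, v x = (α + β * x.2, γ + δ * x.1)) :
    (((v ((a₁ + b₁) / 2, a₂)).1 = 0 → (v ((a₁ + b₁) / 2, b₂)).1 = 0 →
      (v (a₁, (a₂ + b₂) / 2)).2 = 0 → (v (b₁, (a₂ + b₂) / 2)).2 = 0 →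
      ∀ x, v x = 0)
    ∧
    ((∃ x, v x ≠ 0) →
      0 < A * ((1 / 2) * ((v ((a₁ + b₁) / 2, a₂)).1 ^ 2 + (v ((a₁ + b₁) / 2, b₂)).1 ^ 2)
             + (1 / 2) * ((v (a₁, (a₂ + b₂) / 2)).2 ^ 2 + (v (b₁, (a₂ + b₂) / 2)).2 ^ 2)))) := by
  have unisolvent : (v ((a₁ + b₁) / 2, a₂)).1 = 0 → (v ((a₁ + b₁) / 2, b₂)).1 = 0 →
      (v (a₁, (a₂ + b₂) / 2)).2 = 0 → (v (b₁, (a₂ + b₂) / 2)).2 = 0 → ∀ x, v x = 0 := by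
    simp only [hv]
    intro hb hc ha hd x
    obtain ⟨rfl, rfl⟩ := affine_coeffs_eq_zero_of_eq_zero_of_eq_zero h2.ne hb hc
    obtain ⟨rfl, rfl⟩ := affine_coeffs_eq_zero_of_eq_zero_of_eq_zero h1.ne ha hd
    simp
  refine ⟨unisolvent, fun ⟨x, hx⟩ => ?_⟩
  have hA_pos : 0 < A := hA ▸ mul_pos (sub_pos.2 h1) (sub_pos.2 h2)
  refine mul_pos hA_pos (lt_of_le_of_ne (by positivity) fun hQ => hx ?_)
  obtain ⟨hb, hc, ha, hd⟩ := eq_zero_of_half_sq_add_sq_add_half_sq_add_sq_eq_zero hQ.symm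
  exact unisolvent hb hc ha hd x

/-- On an axis-aligned rectangle `K = [a₁,b₁] × [a₂,b₂]`, if
`v = (v₁,v₂) ∈ N0(K) = {(α+βy, γ+δx)}` satisfies `v₁(m_{h,1}) = v₁(m_{h,2}) = 0`
and `v₂(m_{v,1}) = v₂(m_{v,2}) = 0`, then `v = 0`; consequently the quadrature
form `(u,v)_{h,K} = |K| (½ Σᵢ u₁(m_{h,i}) v₁(m_{h,i}) + ½ Σⱼ u₂(m_{v,j}) v₂(m_{v,j}))`
is positive definite on `N0(K)`. -/
theorem stmt_5
    (a₁ b₁ a₂ b₂ : ℝ) (h1 : a₁ < b₁) (h2 : a₂ < b₂)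
    (K : Set (ℝ × ℝ)) (hK : K = Set.Icc a₁ b₁ ×ˢ Set.Icc a₂ b₂)
    (A : ℝ) (hA : A = (b₁ - a₁) * (b₂ - a₂))
    (v : ℝ × ℝ → ℝ × ℝ) (α β γ δ : ℝ)
    (hv : ∀ x : ℝ × ℝ, v x = (α + β * x.2, γ + δ * x.1)) :
    (((v ((a₁ + b₁) / 2, a₂)).1 = 0 → (v ((a₁ + b₁) / 2, b₂)).1 = 0 →
      (v (a₁, (a₂ + b₂) / 2)).2 = 0 → (v (b₁, (a₂ + b₂) / 2)).2 = 0 →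
      ∀ x, v x = 0)
    ∧
    ((∃ x, v x ≠ 0) →
      0 < A * ((1 / 2) * ((v ((a₁ + b₁) / 2, a₂)).1 ^ 2 + (v ((a₁ + b₁) / 2, b₂)).1 ^ 2)
             + (1 / 2) * ((v (a₁, (a₂ + b₂) / 2)).2 ^ 2 + (v (b₁, (a₂ + b₂) / 2)).2 ^ 2)))) :=
  stmt_5_general a₁ b₁ a₂ b₂ h1 h2 A hA v α β γ δ hv
end

section
/- There exist absolute constants 0 < c ≤ C such that for every axis-aligned rectangle K = [a₁,b₁] × [a₂,b₂] ⊂ ℝ² and every v ∈ N0(K), c ‖v‖²_{L²(K)} ≤ |K| (½ Σ_{i=1}^{2} v₁(m_{h,i})² + ½ Σ_{j=1}^{2} v₂(m_{v,j})²) ≤ C ‖v‖²_{L²(K)}; i.e., the quadrature-induced norm is equivalent to the L²(K)-norm on N0(K), uniformly over all rectangles. -/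
/-!
On the rectangle, `|v|² = (α + β y)² + (γ + δ x)²` separates into squares of affine functions of one
variable, and the quadrature applies the trapezoidal rule to each of them in its own variable. For
an affine `f` on `[a, b]` with midpoint value `m` and increment `d = f b - f a`, both the mean of
`f²` and the trapezoidal value `(f a ² + f b ²) / 2` equal `m²` plus a multiple of `d²`, namely
`d² / 12` and `d² / 4`; hence they agree up to the factor `3`, with constants independent of the
rectangle.
-/

open MeasureTheory

/-- Squared Euclidean norm on ℝ². -/
noncomputable def sq2 (u : ℝ × ℝ) : ℝ := u.1 ^ 2 + u.2 ^ 2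

open Set

theorem integral_Icc_affine_sq {a b : ℝ} (hab : a ≤ b) (p q : ℝ) :
    ∫ t in Icc a b, (p + q * t) ^ 2 =
      (b - a) * ((p + q * ((a + b) / 2)) ^ 2 + (q * (b - a)) ^ 2 / 12) := by
  rw [integral_Icc_eq_integral_Ioc, ← intervalIntegral.integral_of_le hab]
  have expand : (fun t : ℝ => (p + q * t) ^ 2) =
      fun t => p ^ 2 + ((2 * p * q) * t + q ^ 2 * t ^ 2) := by
    ext; ring
  rw [expand, intervalIntegral.integral_add, intervalIntegral.integral_add,
    intervalIntegral.integral_const_mul, intervalIntegral.integral_const_mul, integral_id,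
    integral_pow, intervalIntegral.integral_const, smul_eq_mul]
  · ring
  all_goals exact Continuous.intervalIntegrable (by fun_prop) a b

theorem trapezoid_affine_sq (a b p q : ℝ) :
    ((p + q * a) ^ 2 + (p + q * b) ^ 2) / 2 =
      (p + q * ((a + b) / 2)) ^ 2 + (q * (b - a)) ^ 2 / 4 := by
  ring

theorem integral_Icc_affine_sq_le_trapezoid {a b : ℝ} (hab : a ≤ b) (p q : ℝ) :
    ∫ t in Icc a b, (p + q * t) ^ 2 ≤ (b - a) * (((p + q * a) ^ 2 + (p + q * b) ^ 2) / 2) := by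
  rw [integral_Icc_affine_sq hab, trapezoid_affine_sq]
  linarith [mul_nonneg (sub_nonneg.2 hab) (sq_nonneg (q * (b - a)))]

theorem trapezoid_le_three_mul_integral_Icc_affine_sq {a b : ℝ} (hab : a ≤ b) (p q : ℝ) :
    (b - a) * (((p + q * a) ^ 2 + (p + q * b) ^ 2) / 2) ≤ 3 * ∫ t in Icc a b, (p + q * t) ^ 2 := by
  rw [integral_Icc_affine_sq hab, trapezoid_affine_sq]
  linarith [mul_nonneg (sub_nonneg.2 hab) (sq_nonneg (p + q * ((a + b) / 2)))]

theorem setIntegral_Icc_prod_Icc_add_s6 {a₁ b₁ a₂ b₂ : ℝ} (h₁ : a₁ ≤ b₁) (h₂ : a₂ ≤ b₂) {f g : ℝ → ℝ}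
    (hf : Continuous f) (hg : Continuous g) :
    ∫ x in Icc a₁ b₁ ×ˢ Icc a₂ b₂, (f x.1 + g x.2) =
      (b₂ - a₂) * (∫ s in Icc a₁ b₁, f s) + (b₁ - a₁) * ∫ t in Icc a₂ b₂, g t := by
  have hint : IntegrableOn (fun x : ℝ × ℝ => f x.1 + g x.2) (Icc a₁ b₁ ×ˢ Icc a₂ b₂) := by
    rw [Icc_prod_Icc]
    exact Continuous.integrableOn_Icc (by fun_prop)
  rw [Measure.volume_eq_prod] at hint ⊢
  rw [setIntegral_prod _ hint]
  have inner (s : ℝ) :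
      ∫ t in Icc a₂ b₂, (f s + g t) = (b₂ - a₂) * f s + ∫ t in Icc a₂ b₂, g t := by
    rw [integral_add continuous_const.integrableOn_Icc hg.integrableOn_Icc, setIntegral_const,
      Real.volume_real_Icc_of_le h₂, smul_eq_mul]
  simp only [inner]
  rw [integral_add (hf.integrableOn_Icc.const_mul _) continuous_const.integrableOn_Icc,
    integral_const_mul, setIntegral_const, Real.volume_real_Icc_of_le h₁, smul_eq_mul]

/-- There exist absolute constants `0 < c ≤ C` such that for every
axis-aligned rectangle `K = [a₁,b₁] × [a₂,b₂]` and every `v ∈ N0(K) = {(α+βy, γ+δx)}`: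
`c ‖v‖²_{L²(K)} ≤ |K| (½ Σᵢ v₁(m_{h,i})² + ½ Σⱼ v₂(m_{v,j})²) ≤ C ‖v‖²_{L²(K)}`. -/
theorem stmt_6 :
    ∃ c C : ℝ, 0 < c ∧ c ≤ C ∧
      ∀ a₁ b₁ a₂ b₂ : ℝ, a₁ < b₁ → a₂ < b₂ →
      ∀ K : Set (ℝ × ℝ), K = Set.Icc a₁ b₁ ×ˢ Set.Icc a₂ b₂ →
      ∀ A : ℝ, A = (b₁ - a₁) * (b₂ - a₂) →
      ∀ (v : ℝ × ℝ → ℝ × ℝ) (α β γ δ : ℝ),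
        (∀ x : ℝ × ℝ, v x = (α + β * x.2, γ + δ * x.1)) →
      c * (∫ x in K, sq2 (v x))
          ≤ A * ((1 / 2) * ((v ((a₁ + b₁) / 2, a₂)).1 ^ 2 + (v ((a₁ + b₁) / 2, b₂)).1 ^ 2)
               + (1 / 2) * ((v (a₁, (a₂ + b₂) / 2)).2 ^ 2 + (v (b₁, (a₂ + b₂) / 2)).2 ^ 2)) ∧
      A * ((1 / 2) * ((v ((a₁ + b₁) / 2, a₂)).1 ^ 2 + (v ((a₁ + b₁) / 2, b₂)).1 ^ 2)
         + (1 / 2) * ((v (a₁, (a₂ + b₂) / 2)).2 ^ 2 + (v (b₁, (a₂ + b₂) / 2)).2 ^ 2))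
          ≤ C * (∫ x in K, sq2 (v x)) := by
  refine ⟨1, 3, one_pos, by norm_num, ?_⟩
  rintro a₁ b₁ a₂ b₂ h₁ h₂ K rfl A rfl v α β γ δ hv
  have integral_eq : ∫ x in Icc a₁ b₁ ×ˢ Icc a₂ b₂, sq2 (v x) =
      (b₂ - a₂) * (∫ s in Icc a₁ b₁, (γ + δ * s) ^ 2) +
        (b₁ - a₁) * ∫ t in Icc a₂ b₂, (α + β * t) ^ 2 := by
    simp only [hv, sq2, add_comm ((α + β * _) ^ 2)]
    exact setIntegral_Icc_prod_Icc_add_s6 (f := fun s => (γ + δ * s) ^ 2)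
      (g := fun t => (α + β * t) ^ 2) h₁.le h₂.le (by fun_prop) (by fun_prop)
  have quadrature_eq :
      (b₁ - a₁) * (b₂ - a₂) *
          ((1 / 2) * ((v ((a₁ + b₁) / 2, a₂)).1 ^ 2 + (v ((a₁ + b₁) / 2, b₂)).1 ^ 2)
            + (1 / 2) * ((v (a₁, (a₂ + b₂) / 2)).2 ^ 2 + (v (b₁, (a₂ + b₂) / 2)).2 ^ 2)) =
        (b₂ - a₂) * ((b₁ - a₁) * (((γ + δ * a₁) ^ 2 + (γ + δ * b₁) ^ 2) / 2)) +
          (b₁ - a₁) * ((b₂ - a₂) * (((α + β * a₂) ^ 2 + (α + β * b₂) ^ 2) / 2)) := by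
    simp only [hv]
    ring
  rw [integral_eq, quadrature_eq, one_mul]
  constructor
  · gcongr
    exacts [integral_Icc_affine_sq_le_trapezoid h₁.le γ δ,
      integral_Icc_affine_sq_le_trapezoid h₂.le α β]
  · have h₁' := trapezoid_le_three_mul_integral_Icc_affine_sq h₁.le γ δ
    have h₂' := trapezoid_le_three_mul_integral_Icc_affine_sq h₂.le α β
    linarith [mul_le_mul_of_nonneg_left h₁' (sub_nonneg.2 h₂.le),
      mul_le_mul_of_nonneg_left h₂' (sub_nonneg.2 h₁.le)]
end

section
/- Let K ⊂ ℝ² be a nondegenerate triangle. The six vector fields Φ⁰_12, Φ⁰_23, Φ⁰_31, Φ^B_12, Φ^B_23, Φ^B_31 are linearly independent over ℝ; in particular the enriched space N0⁺(K) has dimension 6, and the lowest-order Nédélec space N0(K) = span{Φ⁰_12, Φ⁰_23, Φ⁰_31} intersects the bubble space B(K) = span{Φ^B_12, Φ^B_23, Φ^B_31} only in {0}. -/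
open MeasureTheory

/-!
At a vertex `p j` every bubble `λ_i λ_{i+1} ∇λ_{i+2}` vanishes, while only `Φ⁰_j` and `Φ⁰_{j-1}`
survive, leaving `c_j ∇λ_{j+1} - c_{j-1} ∇λ_{j+2}`; two distinct gradients are linearly independent,
so the Nédélec coefficients vanish. At the midpoint of the edge `p j p (j+1)` only the bubble
`Φ^B_j` survives, equal to `∇λ_{j+2} / 4 ≠ 0`, so the bubble coefficients vanish too.
-/

namespace Barycentric

variable {p : Fin 3 → ℝ × ℝ} {lam : Fin 3 → ℝ × ℝ → ℝ} {g : Fin 3 → ℝ × ℝ} {cc : Fin 3 → ℝ}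

theorem dot_add_smul_left (α β : ℝ) (u v x : ℝ × ℝ) :
    dot (α • u + β • v) x = α * dot u x + β * dot v x := by
  simp only [dot, Prod.fst_add, Prod.snd_add, Prod.smul_fst, Prod.smul_snd, smul_eq_mul]
  ring

theorem lam_midpoint (hlam : ∀ i x, lam i x = dot (g i) x + cc i) (i : Fin 3) (u v : ℝ × ℝ) :
    lam i (midpoint ℝ u v) = (lam i u + lam i v) / 2 := by
  simp only [hlam, dot, midpoint_eq_smul_add, Prod.smul_fst, Prod.smul_snd, Prod.fst_add,
    Prod.snd_add, smul_eq_mul]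
  norm_num
  ring

theorem gradient_ne_zero (hlam : ∀ i x, lam i x = dot (g i) x + cc i)
    (hdelta : ∀ i j, lam i (p j) = if i = j then 1 else 0) (i : Fin 3) : g i ≠ 0 := by
  intro hg
  have hconst : ∀ x, lam i x = cc i := fun x => by simp [hlam, hg, dot]
  obtain ⟨j, hji⟩ := exists_ne i
  have h₁ := hdelta i i
  have h₀ := hdelta i j
  rw [hconst] at h₀ h₁
  simp_all [hji.symm]

theorem linearIndependent_gradient_pair (hlam : ∀ i x, lam i x = dot (g i) x + cc i)
    (hdelta : ∀ i j, lam i (p j) = if i = j then 1 else 0) {i j : Fin 3} (hij : i ≠ j) :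
    LinearIndependent ℝ ![g i, g j] := by
  refine LinearIndependent.pair_iff.2 fun α β h => ?_
  -- `α λ_i + β λ_j` has zero gradient, hence is constant; compare its values at the three vertices.
  have hconst : ∀ x, α * lam i x + β * lam j x = α * cc i + β * cc j := fun x => by
    have hzero : α * dot (g i) x + β * dot (g j) x = 0 := by
      rw [← dot_add_smul_left, h]
      simp [dot]
    rw [hlam, hlam]
    linear_combination hzero
  obtain ⟨k, hki, hkj⟩ : ∃ k, k ≠ i ∧ k ≠ j := by
    fin_cases i <;> fin_cases j <;> decide
  have hi := hconst (p i)
  have hj := hconst (p j)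
  have hk := hconst (p k)
  simp only [hdelta, hij, hij.symm, hki.symm, hkj.symm, if_true, if_false] at hi hj hk
  constructor <;> linarith

variable {Phi0 PhiB : Fin 3 → ℝ × ℝ → ℝ × ℝ}

theorem sum_smul_phi0_vertex (hdelta : ∀ i j, lam i (p j) = if i = j then 1 else 0)
    (hPhi0 : ∀ i x, Phi0 i x = lam i x • g (i + 1) - lam (i + 1) x • g i) (a : Fin 3 → ℝ)
    (j : Fin 3) : ∑ i, a i • Phi0 i (p j) = a j • g (j + 1) - a (j + 2) • g (j + 2) := by
  fin_cases j <;> simp [Fin.sum_univ_three, hPhi0, hdelta] <;> abel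

theorem phiB_vertex (hdelta : ∀ i j, lam i (p j) = if i = j then 1 else 0)
    (hPhiB : ∀ i x, PhiB i x = (lam i x * lam (i + 1) x) • g (i + 2)) (i j : Fin 3) :
    PhiB i (p j) = 0 := by
  fin_cases i <;> fin_cases j <;> simp [hPhiB, hdelta]

theorem sum_smul_phiB_midpoint (hlam : ∀ i x, lam i x = dot (g i) x + cc i)
    (hdelta : ∀ i j, lam i (p j) = if i = j then 1 else 0)
    (hPhiB : ∀ i x, PhiB i x = (lam i x * lam (i + 1) x) • g (i + 2)) (a : Fin 3 → ℝ)
    (j : Fin 3) :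
    ∑ i, a i • PhiB i (midpoint ℝ (p j) (p (j + 1))) = (a j / 4) • g (j + 2) := by
  fin_cases j <;> simp [Fin.sum_univ_three, hPhiB, lam_midpoint hlam, hdelta] <;> module

end Barycentric

open Barycentric

theorem stmt_12_general
    (p : Fin 3 → ℝ × ℝ)
    (lam : Fin 3 → ℝ × ℝ → ℝ) (g : Fin 3 → ℝ × ℝ) (cc : Fin 3 → ℝ)
    (hlam : ∀ i x, lam i x = dot (g i) x + cc i)
    (hdelta : ∀ i j, lam i (p j) = if i = j then 1 else 0)
    (Phi0 PhiB : Fin 3 → ℝ × ℝ → ℝ × ℝ)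
    (hPhi0 : ∀ i x, Phi0 i x = lam i x • g (i + 1) - lam (i + 1) x • g i)
    (hPhiB : ∀ i x, PhiB i x = (lam i x * lam (i + 1) x) • g (i + 2)) :
    LinearIndependent ℝ (Sum.elim Phi0 PhiB : Fin 3 ⊕ Fin 3 → (ℝ × ℝ → ℝ × ℝ)) := by
  rw [Fintype.linearIndependent_iff]
  intro c hc
  have hsum : ∀ x, ∑ i, c (.inl i) • Phi0 i x + ∑ i, c (.inr i) • PhiB i x = 0 := fun x => by
    simpa [Fintype.sum_sum_type] using congrFun hc x
  have hNedelec : ∀ j, c (.inl j) = 0 := fun j => by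
    have h := hsum (p j)
    simp only [phiB_vertex hdelta hPhiB, smul_zero, Finset.sum_const_zero, add_zero,
      sum_smul_phi0_vertex hdelta hPhi0, sub_eq_add_neg, ← neg_smul] at h
    have hne : j + 1 ≠ j + 2 := (add_right_injective j).ne (by decide)
    exact (LinearIndependent.pair_iff.1 (linearIndependent_gradient_pair hlam hdelta hne) _ _ h).1
  have hBubble : ∀ j, c (.inr j) = 0 := fun j => by
    have h := hsum (midpoint ℝ (p j) (p (j + 1)))
    simp only [hNedelec, zero_smul, Finset.sum_const_zero, zero_add,
      sum_smul_phiB_midpoint hlam hdelta hPhiB] at h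
    have := (smul_eq_zero.1 h).resolve_right (gradient_ne_zero hlam hdelta _)
    linarith
  rintro (i | i)
  exacts [hNedelec i, hBubble i]

/-- On a nondegenerate triangle, the six vector fields
`Φ⁰_12, Φ⁰_23, Φ⁰_31, Φ^B_12, Φ^B_23, Φ^B_31` are linearly independent over ℝ:
any vanishing linear combination has all coefficients zero. In particular
`dim N0⁺(K) = 6` and `N0(K) ∩ B(K) = {0}`. -/
theorem stmt_12
    (p : Fin 3 → ℝ × ℝ) (hp : AffineIndependent ℝ p)
    (K : Set (ℝ × ℝ)) (hK : K = convexHull ℝ (Set.range p))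
    (lam : Fin 3 → ℝ × ℝ → ℝ) (g : Fin 3 → ℝ × ℝ) (cc : Fin 3 → ℝ)
    (hlam : ∀ i x, lam i x = dot (g i) x + cc i)
    (hdelta : ∀ i j, lam i (p j) = if i = j then 1 else 0)
    (Phi0 PhiB : Fin 3 → ℝ × ℝ → ℝ × ℝ)
    (hPhi0 : ∀ i x, Phi0 i x = lam i x • g (i + 1) - lam (i + 1) x • g i)
    (hPhiB : ∀ i x, PhiB i x = (lam i x * lam (i + 1) x) • g (i + 2)) :
    LinearIndependent ℝ (Sum.elim Phi0 PhiB : Fin 3 ⊕ Fin 3 → (ℝ × ℝ → ℝ × ℝ)) :=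
  stmt_12_general p lam g cc hlam hdelta Phi0 PhiB hPhi0 hPhiB
end

section
/- Let K ⊂ ℝ² be a nondegenerate triangle and N0(K) = {a + b(−y, x)ᵀ : a ∈ ℝ², b ∈ ℝ} the lowest-order triangular Nédélec space. If v ∈ N0(K) satisfies ∫_{e_i} v · t_i ds = 0 for each of the three edges e_i of K (with t_i a unit tangent vector of e_i), then v = 0. Consequently, for every continuous vector field E there is a unique interpolant Π_K E ∈ N0(K) with ∫_{e_i} (Π_K E) · t_i ds = ∫_{e_i} E · t_i ds for i = 1, 2, 3. -/
open MeasureTheory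

/-- Edge functional: `∫_e v ⬝ t ds = ∫_0^1 v(q₀ + s(q₁−q₀)) ⬝ (q₁−q₀) ds` for the
segment `e` from `q₀` to `q₁`. -/
noncomputable def edgeInt (v : ℝ × ℝ → ℝ × ℝ) (q₀ q₁ : ℝ × ℝ) : ℝ :=
  ∫ s in (0 : ℝ)..1, dot (v (q₀ + s • (q₁ - q₀))) (q₁ - q₀)

/-!
The Nédélec field `a + b (−y, x)` has constant tangential component along any segment,
so its three edge integrals are linear in `(a, b)` with an explicit `3 × 3` matrix. That
matrix has determinant `D²`, where `D = det [1, xᵢ, yᵢ]` is twice the signed area of the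
triangle, and `D ≠ 0` is exactly affine independence of the vertices: a vector in the left
kernel of `[1, xᵢ, yᵢ]` is a vanishing affine combination of the vertices. Hence the edge
functionals are a bijection from `N0(K)` onto `ℝ³`.
-/

open Matrix

noncomputable section

def nedelec (ab : (ℝ × ℝ) × ℝ) (x : ℝ × ℝ) : ℝ × ℝ :=
  (ab.1.1 - ab.2 * x.2, ab.1.2 + ab.2 * x.1)

@[simps]
def nedelecCoords : (ℝ × ℝ) × ℝ ≃ (Fin 3 → ℝ) where
  toFun ab := ![ab.1.1, ab.1.2, ab.2]
  invFun c := ((c 0, c 1), c 2)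
  left_inv _ := rfl
  right_inv c := by ext i; fin_cases i <;> rfl

-- The integrand is constant: its `s`-dependence is `s (q₁ − q₀) × (q₁ − q₀) = 0`.
theorem edgeInt_nedelec (ab : (ℝ × ℝ) × ℝ) (q₀ q₁ : ℝ × ℝ) :
    edgeInt (nedelec ab) q₀ q₁ =
      ab.1.1 * (q₁.1 - q₀.1) + ab.1.2 * (q₁.2 - q₀.2) + ab.2 * (q₀.1 * q₁.2 - q₀.2 * q₁.1) := by
  have hconst : ∀ s : ℝ, dot (nedelec ab (q₀ + s • (q₁ - q₀))) (q₁ - q₀) =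
      ab.1.1 * (q₁.1 - q₀.1) + ab.1.2 * (q₁.2 - q₀.2) + ab.2 * (q₀.1 * q₁.2 - q₀.2 * q₁.1) := by
    intro s
    simp only [dot, nedelec, Prod.fst_add, Prod.snd_add, Prod.fst_sub, Prod.snd_sub,
      Prod.smul_fst, Prod.smul_snd, smul_eq_mul]
    ring
  simp [edgeInt, hconst]

def vertexMatrix (p : Fin 3 → ℝ × ℝ) : Matrix (Fin 3) (Fin 3) ℝ :=
  Matrix.of fun i => ![1, (p i).1, (p i).2]

theorem det_vertexMatrix_ne_zero {p : Fin 3 → ℝ × ℝ} (hp : AffineIndependent ℝ p) :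
    (vertexMatrix p).det ≠ 0 := by
  intro hdet
  obtain ⟨w, hw_ne, hw⟩ := exists_vecMul_eq_zero_iff.mpr hdet
  have hcol : ∀ j, ∑ i, w i * vertexMatrix p i j = 0 := fun j => congrFun hw j
  refine hw_ne (funext fun i => affineIndependent_iff.mp hp Finset.univ w ?_ ?_ i
    (Finset.mem_univ i))
  · simpa [vertexMatrix] using hcol 0
  · ext
    · simpa [vertexMatrix, Prod.fst_sum] using hcol 1
    · simpa [vertexMatrix, Prod.snd_sum] using hcol 2

def edgeMatrix (p : Fin 3 → ℝ × ℝ) : Matrix (Fin 3) (Fin 3) ℝ :=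
  Matrix.of fun i => ![(p (i + 2)).1 - (p (i + 1)).1, (p (i + 2)).2 - (p (i + 1)).2,
    (p (i + 1)).1 * (p (i + 2)).2 - (p (i + 1)).2 * (p (i + 2)).1]

theorem det_edgeMatrix (p : Fin 3 → ℝ × ℝ) :
    (edgeMatrix p).det = (vertexMatrix p).det ^ 2 := by
  simp [det_fin_three, edgeMatrix, vertexMatrix]
  ring

def edgeDofs (p : Fin 3 → ℝ × ℝ) (ab : (ℝ × ℝ) × ℝ) : Fin 3 → ℝ :=
  fun i => edgeInt (nedelec ab) (p (i + 1)) (p (i + 2))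

theorem edgeDofs_eq_mulVec (p : Fin 3 → ℝ × ℝ) :
    edgeDofs p = (edgeMatrix p *ᵥ ·) ∘ nedelecCoords := by
  ext ab i
  simp [edgeDofs, edgeInt_nedelec, edgeMatrix, mulVec, dotProduct, Fin.sum_univ_three]
  ring

theorem edgeDofs_bijective {p : Fin 3 → ℝ × ℝ} (hp : AffineIndependent ℝ p) :
    Function.Bijective (edgeDofs p) := by
  have hM : IsUnit (edgeMatrix p) := by
    rw [isUnit_iff_isUnit_det, det_edgeMatrix]
    exact (pow_ne_zero 2 (det_vertexMatrix_ne_zero hp)).isUnit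
  rw [edgeDofs_eq_mulVec]
  exact Function.Bijective.comp
    ⟨mulVec_injective_iff_isUnit.mpr hM, mulVec_surjective_iff_isUnit.mpr hM⟩
    nedelecCoords.bijective

theorem edgeDofs_zero (p : Fin 3 → ℝ × ℝ) : edgeDofs p 0 = 0 := by
  ext i
  simp [edgeDofs, edgeInt_nedelec]

end

theorem stmt_14_general
    (p : Fin 3 → ℝ × ℝ) (hp : AffineIndependent ℝ p) :
    (∀ (v : ℝ × ℝ → ℝ × ℝ) (a : ℝ × ℝ) (b : ℝ),
      (∀ x : ℝ × ℝ, v x = (a.1 - b * x.2, a.2 + b * x.1)) →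
      (∀ i : Fin 3, edgeInt v (p (i + 1)) (p (i + 2)) = 0) →
      ∀ x, v x = 0) ∧
    (∀ E : ℝ × ℝ → ℝ × ℝ, Continuous E →
      ∃! ab : (ℝ × ℝ) × ℝ, ∀ i : Fin 3,
        edgeInt (fun x => (ab.1.1 - ab.2 * x.2, ab.1.2 + ab.2 * x.1))
            (p (i + 1)) (p (i + 2))
          = edgeInt E (p (i + 1)) (p (i + 2))) := by
  have hbij := edgeDofs_bijective hp
  refine ⟨fun v a b hv hdofs => ?_, fun E _ => ?_⟩
  · obtain rfl : v = nedelec (a, b) := funext hv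
    have hab : (a, b) = 0 := hbij.injective ((funext hdofs).trans (edgeDofs_zero p).symm)
    obtain ⟨rfl, rfl⟩ := Prod.mk_eq_zero.mp hab
    intro x
    simp [nedelec]
  · have hunique := hbij.existsUnique fun i => edgeInt E (p (i + 1)) (p (i + 2))
    simp only [funext_iff] at hunique
    exact hunique

/-- On a nondegenerate triangle `K`, if `v ∈ N0(K) = {a + b(−y,x)ᵀ}`
has vanishing tangential edge integrals on all three edges then `v = 0`;
consequently, for every continuous vector field `E` there is a unique interpolant
`Π_K E ∈ N0(K)` with matching tangential edge integrals. -/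
theorem stmt_14
    (p : Fin 3 → ℝ × ℝ) (hp : AffineIndependent ℝ p)
    (K : Set (ℝ × ℝ)) (hK : K = convexHull ℝ (Set.range p)) :
    (∀ (v : ℝ × ℝ → ℝ × ℝ) (a : ℝ × ℝ) (b : ℝ),
      (∀ x : ℝ × ℝ, v x = (a.1 - b * x.2, a.2 + b * x.1)) →
      (∀ i : Fin 3, edgeInt v (p (i + 1)) (p (i + 2)) = 0) →
      ∀ x, v x = 0) ∧
    (∀ E : ℝ × ℝ → ℝ × ℝ, Continuous E →
      ∃! ab : (ℝ × ℝ) × ℝ, ∀ i : Fin 3,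
        edgeInt (fun x => (ab.1.1 - ab.2 * x.2, ab.1.2 + ab.2 * x.1))
            (p (i + 1)) (p (i + 2))
          = edgeInt E (p (i + 1)) (p (i + 2))) :=
  stmt_14_general p hp
end

section
/- Let K ⊂ ℝ² be a nondegenerate triangle and let E be a continuously differentiable vector field on a neighborhood of K. Then the curl of the lowest-order Nédélec interpolant Π_K E is the mean value of curl E: curl(Π_K E) = (1/|K|) ∫_K curl E(x) dx (note that curl(Π_K E) is a constant, since Π_K E ∈ N0(K)). In particular, curl ∘ Π_K = π⁰_K ∘ curl, where π⁰_K is the L²-orthogonal projection onto constants on K. -/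
open MeasureTheory

/-- Scalar curl in 2D: `curl E = ∂ₓE₂ − ∂_y E₁`. -/
noncomputable def curl2 (E : ℝ × ℝ → ℝ × ℝ) (x : ℝ × ℝ) : ℝ :=
  (fderiv ℝ E x (1, 0)).2 - (fderiv ℝ E x (0, 1)).1

/-!
By Green's theorem the sum of the tangential edge integrals of a `C¹` field around `∂K` is
`± ∫_K curl`, the sign being the orientation of `p₀ p₁ p₂`. The interpolant has the same edge
integrals as `E` and constant curl `2b`, hence `∫_K curl E = 2b |K|`.
Green's theorem on `K` is pulled back along `(s, t) ↦ p₀ + t (p₁ - p₀ + s (p₂ - p₁))`, whose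
Jacobian is `t · cross (p₁ - p₀) (p₂ - p₁)`, to the divergence theorem on the unit square.
-/

open Set

def cross (u v : ℝ × ℝ) : ℝ := u.1 * v.2 - u.2 * v.1

theorem cross_ne_zero_of_linearIndependent {u v : ℝ × ℝ} (h : LinearIndependent ℝ ![u, v]) :
    cross u v ≠ 0 := by
  intro h0
  unfold cross at h0
  have h1 := LinearIndependent.pair_iff.mp h v.1 (-u.1) <| by
    ext
    · simp only [Prod.fst_add, Prod.smul_fst, smul_eq_mul, Prod.fst_zero]; ring
    · simp only [Prod.snd_add, Prod.smul_snd, smul_eq_mul, Prod.snd_zero]; linear_combination -h0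
  have h2 := LinearIndependent.pair_iff.mp h v.2 (-u.2) <| by
    ext
    · simp only [Prod.fst_add, Prod.smul_fst, smul_eq_mul, Prod.fst_zero]; linear_combination h0
    · simp only [Prod.snd_add, Prod.smul_snd, smul_eq_mul, Prod.snd_zero]; ring
  exact h.ne_zero 0 (Prod.ext (by simpa using h1.2) (by simpa using h2.2))

theorem HasFDerivAt.dot {E : Type*} [NormedAddCommGroup E] [NormedSpace ℝ E]
    {c d : E → ℝ × ℝ} {c' d' : E →L[ℝ] ℝ × ℝ} {x : E}
    (hc : HasFDerivAt c c' x) (hd : HasFDerivAt d d' x) :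
    HasFDerivAt (fun y => dot (c y) (d y))
      ((c x).1 • (ContinuousLinearMap.fst ℝ ℝ ℝ).comp d'
        + (d x).1 • (ContinuousLinearMap.fst ℝ ℝ ℝ).comp c'
        + ((c x).2 • (ContinuousLinearMap.snd ℝ ℝ ℝ).comp d'
        + (d x).2 • (ContinuousLinearMap.snd ℝ ℝ ℝ).comp c')) x :=
  (hc.fst.mul hd.fst).add (hc.snd.mul hd.snd)

theorem dot_map_sub_dot_map (L : ℝ × ℝ →L[ℝ] ℝ × ℝ) (u w : ℝ × ℝ) :
    dot (L u) w - dot (L w) u = ((L (1, 0)).2 - (L (0, 1)).1) * cross u w := by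
  have hL : ∀ x : ℝ × ℝ, L x = x.1 • L (1, 0) + x.2 • L (0, 1) := fun x => by
    rw [← map_smul, ← map_smul, ← map_add]; congr 1; ext <;> simp
  rw [hL u, hL w]
  simp only [dot, cross, Prod.fst_add, Prod.snd_add, Prod.smul_fst, Prod.smul_snd, smul_eq_mul]
  ring

theorem edgeInt_swap (G : ℝ × ℝ → ℝ × ℝ) (q₀ q₁ : ℝ × ℝ) :
    edgeInt G q₁ q₀ = -edgeInt G q₀ q₁ := by
  set f : ℝ → ℝ := fun s => dot (G (q₀ + s • (q₁ - q₀))) (q₁ - q₀)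
  have hf : ∀ s : ℝ, dot (G (q₁ + s • (q₀ - q₁))) (q₀ - q₁) = -f (1 - s) := fun s => by
    rw [show q₁ + s • (q₀ - q₁) = q₀ + (1 - s) • (q₁ - q₀) by module,
      show q₀ - q₁ = -(q₁ - q₀) by abel]
    simp only [f, dot, Prod.fst_neg, Prod.snd_neg]; ring
  have hrev := intervalIntegral.integral_comp_sub_left f (a := 0) (b := 1) (1 : ℝ)
  rw [sub_self, sub_zero] at hrev
  simp only [edgeInt, hf, intervalIntegral.integral_neg, hrev, f]

theorem ContinuousLinearMap.det_eq_cross (L : ℝ × ℝ →L[ℝ] ℝ × ℝ) :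
    L.det = cross (L (1, 0)) (L (0, 1)) := by
  change LinearMap.det (L : ℝ × ℝ →ₗ[ℝ] ℝ × ℝ) = _
  rw [← LinearMap.det_toMatrix (Module.Basis.finTwoProd ℝ), Matrix.det_fin_two]
  simp [LinearMap.toMatrix_apply, cross, mul_comm]

section TriangleParam

variable (p₀ p₁ p₂ : ℝ × ℝ)

noncomputable def triangleParam (z : ℝ × ℝ) : ℝ × ℝ :=
  p₀ + z.2 • (p₁ - p₀ + z.1 • (p₂ - p₁))

noncomputable def triangleParamDeriv (z : ℝ × ℝ) : ℝ × ℝ →L[ℝ] ℝ × ℝ :=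
  (ContinuousLinearMap.snd ℝ ℝ ℝ).smulRight (p₁ - p₀)
    + (z.2 • ContinuousLinearMap.fst ℝ ℝ ℝ + z.1 • ContinuousLinearMap.snd ℝ ℝ ℝ).smulRight
      (p₂ - p₁)

variable {p₀ p₁ p₂}

theorem triangleParam_zero_snd (s : ℝ) : triangleParam p₀ p₁ p₂ (s, 0) = p₀ := by
  simp [triangleParam]

theorem triangleParam_one_snd (s : ℝ) :
    triangleParam p₀ p₁ p₂ (s, 1) = p₁ + s • (p₂ - p₁) := by
  simp only [triangleParam]; module

theorem triangleParam_zero_fst (t : ℝ) :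
    triangleParam p₀ p₁ p₂ (0, t) = p₀ + t • (p₁ - p₀) := by
  simp [triangleParam]

theorem triangleParam_one_fst (t : ℝ) :
    triangleParam p₀ p₁ p₂ (1, t) = p₀ + t • (p₂ - p₀) := by
  simp only [triangleParam]; module

theorem image_triangleParam_Icc :
    triangleParam p₀ p₁ p₂ '' (Icc 0 1 ×ˢ Icc 0 1) = convexHull ℝ {p₀, p₁, p₂} := by
  rw [convexHull_insert (by simp), convexHull_pair]
  ext x
  simp only [mem_convexJoin, mem_singleton_iff, exists_eq_left, segment_eq_image', mem_image,
    mem_prod]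
  constructor
  · rintro ⟨⟨s, t⟩, ⟨hs, ht⟩, rfl⟩
    exact ⟨_, ⟨s, hs, rfl⟩, t, ht, by simp only [triangleParam]; module⟩
  · rintro ⟨_, ⟨s, hs, rfl⟩, t, ht, rfl⟩
    exact ⟨(s, t), ⟨hs, ht⟩, by simp only [triangleParam]; module⟩

theorem triangleParamDeriv_one_zero (z : ℝ × ℝ) :
    triangleParamDeriv p₀ p₁ p₂ z (1, 0) = z.2 • (p₂ - p₁) := by
  simp [triangleParamDeriv]

theorem triangleParamDeriv_zero_one (z : ℝ × ℝ) :
    triangleParamDeriv p₀ p₁ p₂ z (0, 1) = p₁ - p₀ + z.1 • (p₂ - p₁) := by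
  simp [triangleParamDeriv]

theorem hasFDerivAt_triangleParam (z : ℝ × ℝ) :
    HasFDerivAt (triangleParam p₀ p₁ p₂) (triangleParamDeriv p₀ p₁ p₂ z) z := by
  have hΦ : triangleParam p₀ p₁ p₂
      = fun z : ℝ × ℝ => p₀ + (z.2 • (p₁ - p₀) + (z.2 * z.1) • (p₂ - p₁)) := by
    funext z; simp only [triangleParam]; module
  rw [hΦ]
  exact ((hasFDerivAt_snd.smul_const _).add
    ((hasFDerivAt_snd.mul hasFDerivAt_fst).smul_const _)).const_add p₀

theorem det_triangleParamDeriv (z : ℝ × ℝ) :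
    (triangleParamDeriv p₀ p₁ p₂ z).det = -(z.2 * cross (p₁ - p₀) (p₂ - p₁)) := by
  rw [ContinuousLinearMap.det_eq_cross, triangleParamDeriv_one_zero, triangleParamDeriv_zero_one]
  simp only [cross, Prod.fst_add, Prod.snd_add, Prod.smul_fst, Prod.smul_snd, smul_eq_mul]
  ring

theorem injOn_triangleParam (h : cross (p₁ - p₀) (p₂ - p₁) ≠ 0) :
    InjOn (triangleParam p₀ p₁ p₂) (Icc 0 1 ×ˢ Ioc 0 1) := by
  rintro ⟨s, t⟩ ⟨-, ht, -⟩ ⟨s', t'⟩ - hΦ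
  set v := p₁ - p₀
  set w := p₂ - p₁
  have hΦ' : t • (v + s • w) = t' • (v + s' • w) := add_left_cancel hΦ
  have hcross : ∀ r u : ℝ, cross (r • (v + u • w)) w = r * cross v w := fun r u => by
    simp only [cross, Prod.smul_fst, Prod.smul_snd, Prod.fst_add, Prod.snd_add, smul_eq_mul]
    ring
  obtain rfl : t = t' := mul_right_cancel₀ h (by rw [← hcross t s, ← hcross t' s', hΦ'])
  have hw : w ≠ 0 := fun hw => h (by simp [cross, hw])
  have hss : (s - s') • w = 0 := by
    rw [sub_smul, sub_eq_zero]
    exact add_left_cancel (smul_right_injective _ ht.ne' hΦ')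
  rw [(smul_eq_zero.mp hss).resolve_right hw |> sub_eq_zero.mp]

end TriangleParam

theorem cross_ne_zero_of_affineIndependent {p : Fin 3 → ℝ × ℝ} (hp : AffineIndependent ℝ p) :
    cross (p 1 - p 0) (p 2 - p 1) ≠ 0 := by
  rw [affineIndependent_iff_linearIndependent_vsub ℝ p 0] at hp
  have hli := hp.comp (fun j : Fin 2 => (⟨j.succ, Fin.succ_ne_zero j⟩ : {x : Fin 3 // x ≠ 0}))
    fun i j hij => Fin.succ_injective _ (congrArg Subtype.val hij)
  rw [show (fun i : {x : Fin 3 // x ≠ 0} => p i -ᵥ p 0) ∘ (fun j : Fin 2 => ⟨j.succ, _⟩)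
      = ![p 1 - p 0, p 2 - p 0] by ext j : 1; fin_cases j <;> rfl] at hli
  convert cross_ne_zero_of_linearIndependent hli using 1
  simp only [cross, Prod.fst_sub, Prod.snd_sub]
  ring

section TriangleIntegral

variable {p₀ p₁ p₂ : ℝ × ℝ}

theorem convexHull_ae_eq_image_triangleParam :
    convexHull ℝ {p₀, p₁, p₂} =ᵐ[volume] triangleParam p₀ p₁ p₂ '' (Icc 0 1 ×ˢ Ioc 0 1) := by
  rw [← image_triangleParam_Icc]
  refine ae_eq_set.mpr ⟨measure_mono_null ?_ (measure_singleton p₀), ?_⟩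
  · rintro _ ⟨⟨⟨s, t⟩, ⟨hs, ht⟩, rfl⟩, hnot⟩
    rcases ht.1.eq_or_lt with rfl | ht₀
    · exact triangleParam_zero_snd s
    · exact absurd ⟨(s, t), ⟨hs, ht₀, ht.2⟩, rfl⟩ hnot
  · rw [sdiff_eq_empty.mpr (image_mono (prod_mono subset_rfl Ioc_subset_Icc_self)),
      measure_empty]

theorem setIntegral_convexHull_eq {F : Type*} [NormedAddCommGroup F] [NormedSpace ℝ F]
    (h : cross (p₁ - p₀) (p₂ - p₁) ≠ 0) (f : ℝ × ℝ → F) :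
    ∫ x in convexHull ℝ {p₀, p₁, p₂}, f x
      = |cross (p₁ - p₀) (p₂ - p₁)|
        • ∫ z in Icc 0 1 ×ˢ Icc 0 1, z.2 • f (triangleParam p₀ p₁ p₂ z) := by
  have hS : MeasurableSet (Icc (0 : ℝ) 1 ×ˢ Ioc (0 : ℝ) 1) :=
    measurableSet_Icc.prod measurableSet_Ioc
  have hae : (Icc (0 : ℝ) 1 ×ˢ Ioc (0 : ℝ) 1 : Set (ℝ × ℝ)) =ᵐ[volume] Icc 0 1 ×ˢ Icc 0 1 := by
    rw [Measure.volume_eq_prod]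
    exact Measure.set_prod_ae_eq (ae_eq_refl _) Ioc_ae_eq_Icc
  rw [setIntegral_congr_set convexHull_ae_eq_image_triangleParam,
    integral_image_eq_integral_abs_det_fderiv_smul volume hS
      (fun z _ => (hasFDerivAt_triangleParam z).hasFDerivWithinAt) (injOn_triangleParam h),
    setIntegral_congr_set hae,
    ← integral_smul]
  refine setIntegral_congr_fun (measurableSet_Icc.prod measurableSet_Icc) fun z hz => ?_
  rw [det_triangleParamDeriv, abs_neg, abs_mul, abs_of_nonneg hz.2.1, smul_smul, mul_comm]

theorem integral_snd_unitSquare : ∫ z in Icc (0 : ℝ) 1 ×ˢ Icc (0 : ℝ) 1, z.2 = 1 / 2 := by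
  have h := integral_prod_mul (μ := volume.restrict (Icc (0 : ℝ) 1))
    (ν := volume.restrict (Icc (0 : ℝ) 1)) (fun _ => (1 : ℝ)) (fun t => t)
  rw [Measure.prod_restrict, ← Measure.volume_eq_prod] at h
  simp only [one_mul] at h
  simp only [h, integral_Icc_eq_integral_Ioc, ← intervalIntegral.integral_of_le zero_le_one,
    integral_id, intervalIntegral.integral_const]
  norm_num

theorem measureReal_convexHull (h : cross (p₁ - p₀) (p₂ - p₁) ≠ 0) :
    volume.real (convexHull ℝ {p₀, p₁, p₂}) = |cross (p₁ - p₀) (p₂ - p₁)| / 2 := by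
  have h1 := setIntegral_convexHull_eq h (fun _ => (1 : ℝ))
  simp only [setIntegral_const, smul_eq_mul, mul_one] at h1
  rw [h1, integral_snd_unitSquare]
  ring

end TriangleIntegral

theorem ContDiffOn.continuousOn_curl2 {U : Set (ℝ × ℝ)} {G : ℝ × ℝ → ℝ × ℝ} (hU : IsOpen U)
    (hG : ContDiffOn ℝ 1 G U) : ContinuousOn (curl2 G) U := by
  have h := hG.continuousOn_fderiv_of_isOpen hU le_rfl
  exact (h.clm_apply continuousOn_const).snd.sub (h.clm_apply continuousOn_const).fst

section Green

variable {p₀ p₁ p₂ : ℝ × ℝ} {U : Set (ℝ × ℝ)} {G : ℝ × ℝ → ℝ × ℝ}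

theorem edgeInt_cycle_eq_cross_mul_integral_unitSquare (hU : IsOpen U) (hG : ContDiffOn ℝ 1 G U)
    (hKU : convexHull ℝ {p₀, p₁, p₂} ⊆ U) :
    edgeInt G p₁ p₂ + edgeInt G p₂ p₀ + edgeInt G p₀ p₁
      = cross (p₁ - p₀) (p₂ - p₁)
        * ∫ z in Icc 0 1 ×ˢ Icc 0 1, z.2 * curl2 G (triangleParam p₀ p₁ p₂ z) := by
  set Φ := triangleParam p₀ p₁ p₂
  have hQ : Icc ((0 : ℝ), (0 : ℝ)) (1, 1) = Icc 0 1 ×ˢ Icc 0 1 := Icc_prod_eq _ _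
  have hΦU : ∀ z ∈ Icc 0 1 ×ˢ Icc 0 1, Φ z ∈ U := fun z hz =>
    hKU (image_triangleParam_Icc ▸ mem_image_of_mem Φ hz)
  have hGΦ : ∀ z ∈ Icc 0 1 ×ˢ Icc 0 1, HasFDerivAt (fun z => G (Φ z))
      ((fderiv ℝ G (Φ z)).comp (triangleParamDeriv p₀ p₁ p₂ z)) z := fun z hz =>
    (((hG.contDiffAt (hU.mem_nhds (hΦU z hz))).differentiableAt one_ne_zero).hasFDerivAt).comp z
      (hasFDerivAt_triangleParam z)
  -- `g ds - f dt` is the pull-back of the 1-form `G · dx` along `Φ`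
  set f : ℝ × ℝ → ℝ := fun z => -dot (G (Φ z)) (p₁ - p₀ + z.1 • (p₂ - p₁))
  set g : ℝ × ℝ → ℝ := fun z => dot (G (Φ z)) (z.2 • (p₂ - p₁))
  have hf : ∀ z ∈ Icc 0 1 ×ˢ Icc 0 1, HasFDerivAt f _ z := fun z hz =>
    ((hGΦ z hz).dot ((hasFDerivAt_fst.smul_const (p₂ - p₁)).const_add (p₁ - p₀))).neg
  have hg : ∀ z ∈ Icc 0 1 ×ˢ Icc 0 1, HasFDerivAt g _ z := fun z hz =>
    (hGΦ z hz).dot (hasFDerivAt_snd.smul_const (p₂ - p₁))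
  have hdiv : ∀ z ∈ Icc 0 1 ×ˢ Icc 0 1, fderiv ℝ f z (1, 0) + fderiv ℝ g z (0, 1)
      = cross (p₁ - p₀) (p₂ - p₁) * (z.2 * curl2 G (Φ z)) := fun z hz => by
    have hL := dot_map_sub_dot_map (fderiv ℝ G (Φ z)) (p₁ - p₀ + z.1 • (p₂ - p₁)) (p₂ - p₁)
    have hcross : cross (p₁ - p₀ + z.1 • (p₂ - p₁)) (p₂ - p₁) = cross (p₁ - p₀) (p₂ - p₁) := by
      simp only [cross, Prod.fst_add, Prod.snd_add, Prod.smul_fst, Prod.smul_snd, smul_eq_mul]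
      ring
    rw [hcross] at hL
    rw [(hf z hz).fderiv, (hg z hz).fderiv]
    simp only [add_apply, neg_apply, smul_apply, ContinuousLinearMap.comp_apply,
      ContinuousLinearMap.smulRight_apply, ContinuousLinearMap.coe_fst',
      ContinuousLinearMap.coe_snd', triangleParamDeriv_one_zero, triangleParamDeriv_zero_one,
      map_smul]
    simp only [curl2, dot, Prod.smul_fst, Prod.smul_snd, smul_eq_mul] at hL ⊢
    linear_combination z.2 * hL
  have hdivInt : IntegrableOn (fun z => fderiv ℝ f z (1, 0) + fderiv ℝ g z (0, 1))
      (Icc 0 1 ×ˢ Icc 0 1) := by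
    refine IntegrableOn.congr_fun ?_ (fun z hz => (hdiv z hz).symm)
      (measurableSet_Icc.prod measurableSet_Icc)
    refine ContinuousOn.integrableOn_compact (isCompact_Icc.prod isCompact_Icc) ?_
    exact continuousOn_const.mul (continuous_snd.continuousOn.mul
      ((hG.continuousOn_curl2 hU).comp
        (fun z _ => (hasFDerivAt_triangleParam z).continuousAt.continuousWithinAt) hΦU))
  have hIoo : Ioo (0 : ℝ) 1 ×ˢ Ioo (0 : ℝ) 1 ⊆ Icc 0 1 ×ˢ Icc 0 1 :=
    prod_mono Ioo_subset_Icc_self Ioo_subset_Icc_self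
  have hdivergence := integral_divergence_prod_Icc_of_hasFDerivAt_of_le f g
    (fderiv ℝ f) (fderiv ℝ g) (0, 0) (1, 1) (by simp [Prod.le_def])
    (fun z hz => (hf z (hQ ▸ hz)).continuousAt.continuousWithinAt)
    (fun z hz => (hg z (hQ ▸ hz)).continuousAt.continuousWithinAt)
    (fun z hz => (hf z (hIoo hz)).differentiableAt.hasFDerivAt)
    (fun z hz => (hg z (hIoo hz)).differentiableAt.hasFDerivAt)
    (hQ ▸ hdivInt)
  rw [hQ, setIntegral_congr_fun (measurableSet_Icc.prod measurableSet_Icc) hdiv,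
    integral_const_mul] at hdivergence
  rw [hdivergence, edgeInt_swap G p₀ p₂]
  simp only [f, g, Φ, triangleParam_one_snd, triangleParam_zero_snd, triangleParam_one_fst,
    triangleParam_zero_fst, one_smul, zero_smul, add_zero, sub_add_sub_cancel',
    intervalIntegral.integral_neg, edgeInt]
  simp [dot]

theorem abs_cross_mul_edgeInt_cycle_eq_integral_curl2 (h : cross (p₁ - p₀) (p₂ - p₁) ≠ 0)
    (hU : IsOpen U) (hG : ContDiffOn ℝ 1 G U) (hKU : convexHull ℝ {p₀, p₁, p₂} ⊆ U) :
    |cross (p₁ - p₀) (p₂ - p₁)| * (edgeInt G p₁ p₂ + edgeInt G p₂ p₀ + edgeInt G p₀ p₁)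
      = cross (p₁ - p₀) (p₂ - p₁) * ∫ x in convexHull ℝ {p₀, p₁, p₂}, curl2 G x := by
  rw [edgeInt_cycle_eq_cross_mul_integral_unitSquare hU hG hKU, setIntegral_convexHull_eq h]
  simp only [smul_eq_mul]
  ring

theorem curl2_rotation (a : ℝ × ℝ) (b : ℝ) (x : ℝ × ℝ) :
    curl2 (fun x : ℝ × ℝ => (a.1 - b * x.2, a.2 + b * x.1)) x = 2 * b := by
  have h : HasFDerivAt (fun x : ℝ × ℝ => (a.1 - b * x.2, a.2 + b * x.1)) _ x :=
    ((hasFDerivAt_const a.1 x).sub ((hasFDerivAt_snd (𝕜 := ℝ) (p := x)).const_mul b)).prodMk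
      ((hasFDerivAt_const a.2 x).add ((hasFDerivAt_fst (𝕜 := ℝ) (p := x)).const_mul b))
  rw [curl2, h.fderiv]
  simp [two_mul]

theorem range_fin_three {α : Type*} (p : Fin 3 → α) : range p = {p 0, p 1, p 2} := by
  ext
  simp [Fin.exists_fin_succ, eq_comm]

/-- For a C¹ vector field `E` on a neighborhood of a nondegenerate
triangle `K`, the (constant) curl of the lowest-order Nédélec interpolant
`Π_K E = a + b(−y,x)ᵀ` (characterized by matching tangential edge integrals)
equals the mean value of `curl E` over `K`: `curl(Π_K E) = 2b = (1/|K|) ∫_K curl E`. -/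
theorem stmt_15
    (p : Fin 3 → ℝ × ℝ) (hp : AffineIndependent ℝ p)
    (K : Set (ℝ × ℝ)) (hK : K = convexHull ℝ (Set.range p))
    (U : Set (ℝ × ℝ)) (hU : IsOpen U) (hKU : K ⊆ U)
    (E : ℝ × ℝ → ℝ × ℝ) (hE : ContDiffOn ℝ 1 E U)
    (a : ℝ × ℝ) (b : ℝ) (PE : ℝ × ℝ → ℝ × ℝ)
    (hPE : ∀ x : ℝ × ℝ, PE x = (a.1 - b * x.2, a.2 + b * x.1))
    (hinterp : ∀ i : Fin 3,
      edgeInt PE (p (i + 1)) (p (i + 2)) = edgeInt E (p (i + 1)) (p (i + 2))) :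
    2 * b = (1 / (volume K).toReal) * ∫ x in K, curl2 E x := by
  have h₁₂ : edgeInt PE (p 1) (p 2) = edgeInt E (p 1) (p 2) := hinterp 0
  have h₂₀ : edgeInt PE (p 2) (p 0) = edgeInt E (p 2) (p 0) := hinterp 1
  have h₀₁ : edgeInt PE (p 0) (p 1) = edgeInt E (p 0) (p 1) := hinterp 2
  obtain rfl : PE = fun x : ℝ × ℝ => (a.1 - b * x.2, a.2 + b * x.1) := funext hPE
  rw [range_fin_three] at hK
  subst hK
  have hD := cross_ne_zero_of_affineIndependent hp
  have hPE_C1 : ContDiffOn ℝ 1 (fun x : ℝ × ℝ => (a.1 - b * x.2, a.2 + b * x.1)) U := by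
    fun_prop
  have hGreenE := abs_cross_mul_edgeInt_cycle_eq_integral_curl2 hD hU hE hKU
  have hGreenPE := abs_cross_mul_edgeInt_cycle_eq_integral_curl2 hD hU hPE_C1 hKU
  rw [h₁₂, h₂₀, h₀₁, hGreenE] at hGreenPE
  simp only [curl2_rotation, setIntegral_const, smul_eq_mul] at hGreenPE
  rw [← measureReal_def, mul_left_cancel₀ hD hGreenPE, measureReal_convexHull hD]
  field_simp
end Green
end
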